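/- arXiv:2212.01372 — 7 statements merged into one kernel-verified Lean document; each statement's English description precedes it below -/
import Mathlib

section
/- If C has PMF P_C(c) = α β^c e^{-βλΔ} ∑_{j=0}^{c} (λΔ)^j / j!, then its probability generating function is G_C(z) = α e^{-βλΔ} e^{zβλΔ}/(1 - zβ) for |z| ≤ 1 with zβ < 1. -/
open Real

lemma exp_tsum_real (y : ℝ) : ∑' n : ℕ, y ^ n / (Nat.factorial n : ℝ) = Real.exp y := by
  rw [Real.exp_eq_exp_ℝ, NormedSpace.exp_eq_tsum_div]

/-- If `C` has PMF `P_C(c) = α βᶜ e^{-βλΔ} ∑_{j=0}^{c} (λΔ)ʲ/j!`, then its probability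
generating function is `G_C(z) = α e^{-βλΔ} e^{zβλΔ}/(1-zβ)` for `|z| ≤ 1` with `zβ < 1`.
Here `d` denotes `λΔ`. -/
theorem PC_pgf (α β d z : ℝ) (hα0 : 0 < α) (hα1 : α < 1) (hβ0 : 0 < β) (hβ1 : β < 1)
    (hαβ : α + β = 1) (hd : 0 ≤ d) (hz : |z| ≤ 1) (hzβ : |z| * β < 1) :
    ∑' c : ℕ,
      (α * β ^ c * Real.exp (-(β * d)) *
        ∑ j ∈ Finset.range (c + 1), d ^ j / (Nat.factorial j : ℝ)) * z ^ c
      = α * Real.exp (-(β * d)) * Real.exp (z * β * d) / (1 - z * β) := by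
  set x := z * β with hx
  have hxabs : |x| < 1 := by
    rw [hx, abs_mul, abs_of_pos hβ0]; exact hzβ
  set S : ℕ → ℝ := fun c => ∑ j ∈ Finset.range (c + 1), d ^ j / (Nat.factorial j : ℝ) with hS
  have hf : Summable (fun j : ℕ => ‖(x * d) ^ j / (Nat.factorial j : ℝ)‖) := by
    have := Real.summable_pow_div_factorial |x * d|
    refine this.congr fun n => ?_
    rw [norm_div, norm_pow, Real.norm_eq_abs, Real.norm_eq_abs, Nat.abs_cast]
  have hg : Summable (fun k : ℕ => ‖x ^ k‖) := by
    simpa [norm_pow] using summable_geometric_of_lt_one (abs_nonneg x) hxabs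
  have key : (∑' j : ℕ, (x * d) ^ j / (Nat.factorial j : ℝ)) * (∑' k : ℕ, x ^ k)
      = ∑' c : ℕ, x ^ c * S c := by
    rw [tsum_mul_tsum_eq_tsum_sum_antidiagonal_of_summable_norm hf hg]
    refine tsum_congr fun n => ?_
    rw [Finset.Nat.sum_antidiagonal_eq_sum_range_succ_mk]
    rw [hS, Finset.mul_sum]
    refine Finset.sum_congr rfl fun j hj => ?_
    have hjn : j ≤ n := Nat.lt_succ_iff.mp (Finset.mem_range.mp hj)
    have hpow : x ^ j * x ^ (n - j) = x ^ n := by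
      rw [← pow_add, Nat.add_sub_cancel' hjn]
    dsimp only
    rw [mul_pow]
    linear_combination (d ^ j / (Nat.factorial j : ℝ)) * hpow
  have hgeom : (∑' k : ℕ, x ^ k) = (1 - x)⁻¹ := by
    refine tsum_geometric_of_norm_lt_one ?_
    simpa [Real.norm_eq_abs] using hxabs
  have hexp : (∑' j : ℕ, (x * d) ^ j / (Nat.factorial j : ℝ)) = Real.exp (x * d) :=
    exp_tsum_real (x * d)
  have key2 : ∑' c : ℕ, x ^ c * S c = Real.exp (x * d) / (1 - x) := by
    rw [← key, hgeom, hexp, div_eq_mul_inv]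
  have congr1 : ∀ c : ℕ,
      (α * β ^ c * Real.exp (-(β * d)) * S c) * z ^ c
        = (α * Real.exp (-(β * d))) * (x ^ c * S c) := fun c => by
    rw [hx, mul_pow]; ring
  rw [tsum_congr congr1, tsum_mul_left, key2]
  rw [hx]
  ring
end

section
/- If S is the sum of k i.i.d. copies of a random variable C with PGF G_C(z) = α₀ e^{zβλΔ}/(1 - zβ) where α₀ = α e^{-βλΔ}, then P(S = s) = α₀^k β^s ∑_{n=0}^{s} C(k-1+n, n) (λΔ k)^{s-n} / (s-n)!. -/
open MeasureTheory ProbabilityTheory Real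

noncomputable def myPois (t : ℝ) : PowerSeries ℝ :=
  PowerSeries.mk fun n => t ^ n / (Nat.factorial n : ℝ)

noncomputable def myNB (k : ℕ) : PowerSeries ℝ :=
  PowerSeries.mk fun n => ((k - 1 + n).choose n : ℝ)

lemma myPois_mul (x y : ℝ) : myPois x * myPois y = myPois (x + y) := by
  ext n
  rw [PowerSeries.coeff_mul, Finset.Nat.sum_antidiagonal_eq_sum_range_succ_mk]
  simp only [myPois, PowerSeries.coeff_mk]
  rw [add_pow, Finset.sum_div]
  refine Finset.sum_congr rfl fun i hi => ?_
  have hin : i ≤ n := by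
    simp only [Finset.mem_range] at hi; omega
  have h1 : (n.choose i : ℝ) = (Nat.factorial n : ℝ) /
      ((Nat.factorial i : ℝ) * (Nat.factorial (n - i) : ℝ)) := Nat.cast_choose ℝ hin
  have h2 : (Nat.factorial i : ℝ) ≠ 0 := Nat.cast_ne_zero.2 (Nat.factorial_ne_zero i)
  have h3 : (Nat.factorial (n - i) : ℝ) ≠ 0 := Nat.cast_ne_zero.2 (Nat.factorial_ne_zero _)
  have h4 : (Nat.factorial n : ℝ) ≠ 0 := Nat.cast_ne_zero.2 (Nat.factorial_ne_zero n)
  rw [h1]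
  field_simp

lemma myNB_mul (k : ℕ) (hk : 1 ≤ k) : myNB k * myNB 1 = myNB (k + 1) := by
  ext n
  rw [PowerSeries.coeff_mul, Finset.Nat.sum_antidiagonal_eq_sum_range_succ_mk]
  simp only [myNB, PowerSeries.coeff_mk]
  have h1 : ∀ m : ℕ, ((1 - 1 + m).choose m : ℝ) = 1 := by
    intro m; simp
  have h2 : ∑ i ∈ Finset.range (n + 1), ((k - 1 + i).choose i : ℝ)
      = ((k + 1 - 1 + n).choose n : ℝ) := by
    rw [← Nat.cast_sum]
    congr 1
    have : ∀ i : ℕ, (k - 1 + i).choose i = (i + (k - 1)).choose (k - 1) := by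
      intro i
      rw [add_comm (k-1) i]
      have := Nat.choose_symm (n := i + (k - 1)) (k := k - 1) (by omega)
      rw [show i + (k - 1) - (k - 1) = i by omega] at this
      exact this
    calc ∑ i ∈ Finset.range (n + 1), (k - 1 + i).choose i
        = ∑ i ∈ Finset.range (n + 1), (i + (k - 1)).choose (k - 1) :=
          Finset.sum_congr rfl fun i _ => this i
      _ = (n + (k - 1) + 1).choose (k - 1 + 1) := Nat.sum_range_add_choose n (k - 1)
      _ = (k + 1 - 1 + n).choose n := by
          rw [show n + (k - 1) + 1 = k + n by omega, show k - 1 + 1 = k by omega,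
            show k + 1 - 1 + n = k + n by omega]
          have := Nat.choose_symm (n := k + n) (k := n) (by omega)
          rw [show k + n - n = k by omega] at this
          exact this
  calc ∑ i ∈ Finset.range (n + 1),
        ((k - 1 + i).choose i : ℝ) * ((1 - 1 + (n - i)).choose (n - i) : ℝ)
      = ∑ i ∈ Finset.range (n + 1), ((k - 1 + i).choose i : ℝ) := by
        refine Finset.sum_congr rfl fun i _ => ?_
        rw [h1 (n - i), mul_one]
    _ = ((k + 1 - 1 + n).choose n : ℝ) := h2

lemma coeff_NB_pois (k : ℕ) (t : ℝ) (s : ℕ) :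
    (PowerSeries.coeff s) (myNB k * myPois t)
      = ∑ n ∈ Finset.range (s + 1),
          ((k - 1 + n).choose n : ℝ) * t ^ (s - n) / (Nat.factorial (s - n) : ℝ) := by
  rw [PowerSeries.coeff_mul, Finset.Nat.sum_antidiagonal_eq_sum_range_succ_mk]
  simp only [myNB, myPois, PowerSeries.coeff_mk]
  exact Finset.sum_congr rfl fun i _ => by rw [mul_div_assoc]

lemma coeff_NB_pois_one (t : ℝ) (s : ℕ) :
    (PowerSeries.coeff s) (myNB 1 * myPois t)
      = ∑ j ∈ Finset.range (s + 1), t ^ j / (Nat.factorial j : ℝ) := by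
  rw [coeff_NB_pois]
  have : ∀ n ∈ Finset.range (s + 1),
      ((1 - 1 + n).choose n : ℝ) * t ^ (s - n) / (Nat.factorial (s - n) : ℝ)
        = t ^ (s - n) / (Nat.factorial (s - n) : ℝ) := by
    intro n _; simp
  rw [Finset.sum_congr rfl this]
  have := Finset.sum_range_reflect (fun j => t ^ j / (Nat.factorial j : ℝ)) (s + 1)
  simp only [Nat.add_sub_cancel] at this
  exact this

lemma coeff_NB_pois_nonneg (k : ℕ) (t : ℝ) (ht : 0 ≤ t) (s : ℕ) :
    0 ≤ (PowerSeries.coeff s) (myNB k * myPois t) := by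
  rw [coeff_NB_pois]
  refine Finset.sum_nonneg fun n _ => ?_
  positivity

/-- convolution of pmfs of independent ℕ-valued random variables -/
lemma meas_add_eq_conv {Ω : Type*} [MeasurableSpace Ω] (μ : Measure Ω)
    (X Y : Ω → ℕ) (hX : Measurable X) (hY : Measurable Y)
    (h : IndepFun X Y μ) (s : ℕ) :
    μ {ω | X ω + Y ω = s}
      = ∑ a ∈ Finset.range (s + 1), μ {ω | X ω = a} * μ {ω | Y ω = s - a} := by
  have hset : {ω | X ω + Y ω = s}
      = ⋃ a ∈ Finset.range (s + 1), ({ω | X ω = a} ∩ {ω | Y ω = s - a}) := by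
    ext ω
    simp only [Set.mem_setOf_eq, Set.mem_iUnion, Set.mem_inter_iff, Finset.mem_range]
    constructor
    · intro hs; exact ⟨X ω, by omega, rfl, by omega⟩
    · rintro ⟨a, ha, h1, h2⟩; omega
  rw [hset, measure_biUnion_finset]
  · refine Finset.sum_congr rfl fun a _ => ?_
    have := h.measure_inter_preimage_eq_mul {a} {s - a}
      (measurableSet_singleton a) (measurableSet_singleton (s - a))
    exact this
  · intro a _ b _ hab
    refine Set.disjoint_left.2 fun ω hωa hωb => ?_
    exact hab (hωa.1.symm.trans hωb.1)
  · intro a _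
    exact (hX (measurableSet_singleton a)).inter (hY (measurableSet_singleton (s - a)))

/-- If `S` is the sum of `k` i.i.d. copies of `C`, where `C` has PMF
`P_C(c) = α βᶜ e^{-βλΔ} ∑_{j=0}^{c} (λΔ)ʲ/j!`, then
`P(S = s) = α₀^k β^s ∑_{n=0}^{s} C(k-1+n,n) (λΔ k)^{s-n}/(s-n)!` with `α₀ = α e^{-βλΔ}`.
Here `d` denotes `λΔ`. -/
theorem sum_iid_pmf {Ω : Type*} [MeasurableSpace Ω] (μ : Measure Ω) [IsProbabilityMeasure μ]
    (α β d : ℝ) (hα0 : 0 < α) (hα1 : α < 1) (hβ0 : 0 < β) (hβ1 : β < 1)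
    (hαβ : α + β = 1) (hd : 0 ≤ d) (k : ℕ) (hk : 1 ≤ k)
    (C : Fin k → Ω → ℕ) (hmeas : ∀ i, Measurable (C i))
    (hindep : iIndepFun C μ)
    (hlaw : ∀ i c, μ {ω | C i ω = c} =
      ENNReal.ofReal (α * β ^ c * Real.exp (-(β * d)) *
        ∑ j ∈ Finset.range (c + 1), d ^ j / (Nat.factorial j : ℝ)))
    (s : ℕ) :
    μ {ω | ∑ i, C i ω = s} =
      ENNReal.ofReal ((α * Real.exp (-(β * d))) ^ k * β ^ s *
        ∑ n ∈ Finset.range (s + 1),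
          (Nat.choose (k - 1 + n) n : ℝ) * (d * k) ^ (s - n) / (Nat.factorial (s - n) : ℝ)) := by
  classical
  set e : ℝ := Real.exp (-(β * d)) with he
  have he0 : 0 < e := Real.exp_pos _
  -- the claimed pmf of a sum of m copies
  set q : ℕ → ℕ → ℝ := fun m n =>
    (α * e) ^ m * β ^ n * (PowerSeries.coeff n) (myNB m * myPois (d * m)) with hq
  have hq_nonneg : ∀ m n, 0 ≤ q m n := by
    intro m n
    have := coeff_NB_pois_nonneg m (d * m) (by positivity) n
    positivity
  -- the pmf of one copy, expressed via power series
  have hp_eq : ∀ c : ℕ,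
      α * β ^ c * e * ∑ j ∈ Finset.range (c + 1), d ^ j / (Nat.factorial j : ℝ)
        = q 1 c := by
    intro c
    rw [hq]
    simp only
    rw [show (d * ((1 : ℕ) : ℝ)) = d by push_cast; ring, coeff_NB_pois_one]
    ring
  have hp_nonneg : ∀ c : ℕ,
      0 ≤ α * β ^ c * e * ∑ j ∈ Finset.range (c + 1), d ^ j / (Nat.factorial j : ℝ) := by
    intro c; rw [hp_eq]; exact hq_nonneg 1 c
  -- convolution identity at the level of real pmfs
  have hconv : ∀ (m : ℕ), 1 ≤ m → ∀ n : ℕ,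
      ∑ a ∈ Finset.range (n + 1), q 1 a * q m (n - a) = q (m + 1) n := by
    intro m hm n
    have hprod : myNB 1 * myPois d * (myNB m * myPois (d * m))
        = myNB (m + 1) * myPois (d * (m + 1 : ℕ)) := by
      have h1 : myNB m * myNB 1 = myNB (m + 1) := myNB_mul m hm
      have h2 : myPois d * myPois (d * m) = myPois (d * (m + 1 : ℕ)) := by
        rw [myPois_mul]
        congr 1
        push_cast
        ring
      calc myNB 1 * myPois d * (myNB m * myPois (d * m))
          = (myNB m * myNB 1) * (myPois d * myPois (d * m)) := by ring
        _ = myNB (m + 1) * myPois (d * (m + 1 : ℕ)) := by rw [h1, h2]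
    rw [hq]
    simp only
    rw [← hprod, PowerSeries.coeff_mul, Finset.Nat.sum_antidiagonal_eq_sum_range_succ_mk,
      Finset.mul_sum]
    refine Finset.sum_congr rfl fun a ha => ?_
    have han : a ≤ n := by simp only [Finset.mem_range] at ha; omega
    have hβpow : β ^ a * β ^ (n - a) = β ^ n := by
      rw [← pow_add]; congr 1; omega
    have h1d : (d * (1 : ℕ) : ℝ) = d := by push_cast; ring
    rw [h1d]
    calc (α * e) ^ 1 * β ^ a * (PowerSeries.coeff a) (myNB 1 * myPois d) *
          ((α * e) ^ m * β ^ (n - a) *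
            (PowerSeries.coeff (n - a)) (myNB m * myPois (d * m)))
        = (α * e) ^ (m + 1) * (β ^ a * β ^ (n - a)) *
          ((PowerSeries.coeff a) (myNB 1 * myPois d) *
            (PowerSeries.coeff (n - a)) (myNB m * myPois (d * m))) := by ring
      _ = (α * e) ^ (m + 1) * β ^ n *
          ((PowerSeries.coeff a) (myNB 1 * myPois d) *
            (PowerSeries.coeff (n - a)) (myNB m * myPois (d * m))) := by rw [hβpow]
  -- main induction over finsets of indices
  have key : ∀ (t : Finset (Fin k)) (ht : t.Nonempty) (n : ℕ),
      μ {ω | ∑ i ∈ t, C i ω = n} = ENNReal.ofReal (q t.card n) := by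
    intro t ht
    induction ht using Finset.Nonempty.cons_induction with
    | singleton a =>
      intro n
      simp only [Finset.sum_singleton, Finset.card_singleton]
      rw [hlaw a n, hp_eq n]
    | cons a t ha ht IH =>
      intro n
      have hXmeas : Measurable fun ω => ∑ i ∈ t, C i ω := by
        apply Finset.measurable_sum
        intro i _; exact hmeas i
      have hindepXY : IndepFun (C a) (fun ω => ∑ i ∈ t, C i ω) μ := by
        have h := hindep.indepFun_finsetSum_of_notMem hmeas ha
        have hfun : (∑ j ∈ t, C j) = fun ω => ∑ i ∈ t, C i ω := by
          ext ω; simp [Finset.sum_apply]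
        rw [hfun] at h
        exact h.symm
      have hsum : {ω | ∑ i ∈ Finset.cons a t ha, C i ω = n}
          = {ω | C a ω + (∑ i ∈ t, C i ω) = n} := by
        ext ω; simp only [Set.mem_setOf_eq, Finset.sum_cons]
      rw [hsum, meas_add_eq_conv μ (C a) (fun ω => ∑ i ∈ t, C i ω) (hmeas a) hXmeas
        hindepXY n]
      have hcard : 1 ≤ t.card := Finset.Nonempty.card_pos ht
      calc ∑ b ∈ Finset.range (n + 1),
            μ {ω | C a ω = b} * μ {ω | ∑ i ∈ t, C i ω = n - b}
          = ∑ b ∈ Finset.range (n + 1),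
              ENNReal.ofReal (q 1 b) * ENNReal.ofReal (q t.card (n - b)) := by
            refine Finset.sum_congr rfl fun b _ => ?_
            rw [hlaw a b, hp_eq b, IH (n - b)]
        _ = ∑ b ∈ Finset.range (n + 1), ENNReal.ofReal (q 1 b * q t.card (n - b)) := by
            refine Finset.sum_congr rfl fun b _ => ?_
            rw [ENNReal.ofReal_mul (hq_nonneg 1 b)]
        _ = ENNReal.ofReal (∑ b ∈ Finset.range (n + 1), q 1 b * q t.card (n - b)) := by
            rw [ENNReal.ofReal_sum_of_nonneg]
            intro b _
            exact mul_nonneg (hq_nonneg 1 b) (hq_nonneg t.card (n - b))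
        _ = ENNReal.ofReal (q (t.card + 1) n) := by rw [hconv t.card hcard n]
        _ = ENNReal.ofReal (q (Finset.cons a t ha).card n) := by
            rw [Finset.card_cons]
  have huniv : (Finset.univ : Finset (Fin k)).Nonempty := by
    have : Nonempty (Fin k) := ⟨⟨0, by omega⟩⟩
    exact Finset.univ_nonempty
  have := key Finset.univ huniv s
  rw [Finset.card_univ, Fintype.card_fin] at this
  rw [this, hq]
  simp only
  rw [coeff_NB_pois]
end

section
/- For the lazy random walk with steps W_i ∈ {-1,0,1} with probabilities α₀, α₁, β₁ (α₀+α₁+β₁ = 1, β₁ < α₀), define T'_i = 𝟙{W_i = 0} + ∑_{j=1}^i W_j. Then for every integer a ≥ 1, P(max_{i≥1} T'_i ≥ a) = (β₁/α₀)^{a-1} · (1-α₀)/(1-β₁). -/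
open MeasureTheory ProbabilityTheory Filter Set Topology

set_option linter.unusedSectionVars false
set_option linter.unusedVariables false
set_option maxHeartbeats 1000000

namespace LazyRW


/-- Box sets: a π-system generating the product σ-algebra on `ℕ → ℤ`. -/
def boxes : Set (Set (ℕ → ℤ)) :=
  {t | ∃ (n : ℕ) (A : ℕ → Set ℤ), t = {w | ∀ i < n, w i ∈ A i}}

lemma isPiSystem_boxes : IsPiSystem boxes := by
  rintro _ ⟨n, A, rfl⟩ _ ⟨m, B, rfl⟩ -
  refine ⟨max n m, fun i => (if i < n then A i else univ) ∩ (if i < m then B i else univ), ?_⟩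
  ext w
  simp only [Set.mem_inter_iff, Set.mem_setOf_eq]
  constructor
  · rintro ⟨h1, h2⟩ i hi
    constructor
    · by_cases h : i < n
      · simpa [h] using h1 i h
      · simp [h]
    · by_cases h : i < m
      · simpa [h] using h2 i h
      · simp [h]
  · intro h
    constructor
    · intro i hi
      have := (h i (lt_of_lt_of_le hi (le_max_left _ _))).1
      simpa [hi] using this
    · intro i hi
      have := (h i (lt_of_lt_of_le hi (le_max_right _ _))).2
      simpa [hi] using this

lemma generateFrom_boxes :
    (MeasurableSpace.pi : MeasurableSpace (ℕ → ℤ)) = MeasurableSpace.generateFrom boxes := by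
  apply le_antisymm
  · refine iSup_le fun i => ?_
    rintro s ⟨A, -, rfl⟩
    apply MeasurableSpace.measurableSet_generateFrom
    refine ⟨i + 1, fun j => if j = i then A else univ, ?_⟩
    ext w
    simp only [Set.mem_preimage, Set.mem_setOf_eq]
    constructor
    · intro h j hj
      by_cases hji : j = i
      · subst hji; simpa using h
      · simp [hji]
    · intro h
      have := h i (Nat.lt_succ_self i)
      simpa using this
  · apply MeasurableSpace.generateFrom_le
    rintro _ ⟨n, A, rfl⟩
    have : {w : ℕ → ℤ | ∀ i < n, w i ∈ A i} = ⋂ i ∈ Finset.range n, (fun w => w i) ⁻¹' A i := by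
      ext w; simp [Finset.mem_range]
    rw [this]
    exact Finset.measurableSet_biInter _ fun i _ =>
      (measurable_pi_apply i) MeasurableSet.of_discrete



variable {Ω : Type*} [MeasurableSpace Ω] {μ : Measure Ω} [IsProbabilityMeasure μ]

lemma marg_eq (α₀ α₁ β₁ : ℝ) (hα₀ : 0 < α₀) (hα₁ : 0 ≤ α₁) (hβ₁ : 0 < β₁)
    (hsum : α₀ + α₁ + β₁ = 1)
    (W : ℕ → Ω → ℤ) (hmeas : ∀ i, Measurable (W i))
    (hm1 : ∀ i, μ {ω | W i ω = -1} = ENNReal.ofReal α₀)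
    (h0 : ∀ i, μ {ω | W i ω = 0} = ENNReal.ofReal α₁)
    (hp1 : ∀ i, μ {ω | W i ω = 1} = ENNReal.ofReal β₁) :
    ∀ i (A : Set ℤ), μ (W i ⁻¹' A) = μ (W 0 ⁻¹' A) := by
  have hsing : ∀ i z, μ {ω | W i ω = z} = μ {ω | W 0 ω = z} := by
    intro i z
    by_cases h1 : z = -1
    · rw [h1, hm1, hm1]
    by_cases h2 : z = 0
    · rw [h2, h0, h0]
    by_cases h3 : z = 1
    · rw [h3, hp1, hp1]
    -- otherwise both are zero
    have key : ∀ j, μ {ω | W j ω = z} = 0 := by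
      intro j
      have hAset : ∀ (z : ℤ), MeasurableSet {ω | W j ω = z} := fun z =>
        (hmeas j) (MeasurableSet.of_discrete (s := {z}))
      have hd1 : Disjoint {ω | W j ω = -1} {ω | W j ω = 0} := by
        rw [Set.disjoint_left]; intro ω h h'
        simp only [Set.mem_setOf_eq] at h h'; omega
      have hd2 : Disjoint ({ω | W j ω = -1} ∪ {ω | W j ω = 0}) {ω | W j ω = 1} := by
        rw [Set.disjoint_left]; intro ω h h'
        simp only [Set.mem_union, Set.mem_setOf_eq] at h h'; omega
      have hU : μ ({ω | W j ω = -1} ∪ {ω | W j ω = 0} ∪ {ω | W j ω = 1}) = 1 := by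
        rw [measure_union hd2 (hAset 1), measure_union hd1 (hAset 0), hm1, h0, hp1,
          ← ENNReal.ofReal_add hα₀.le hα₁, ← ENNReal.ofReal_add (by linarith) hβ₁.le, hsum,
          ENNReal.ofReal_one]
      have hcompl : μ ({ω | W j ω = -1} ∪ {ω | W j ω = 0} ∪ {ω | W j ω = 1})ᶜ = 0 := by
        rw [measure_compl (((hAset (-1)).union (hAset 0)).union (hAset 1))
          (by rw [hU]; exact ENNReal.one_ne_top), measure_univ, hU, tsub_self]
      refine measure_mono_null ?_ hcompl
      intro ω hω
      simp only [Set.mem_setOf_eq] at hω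
      simp only [Set.mem_compl_iff, Set.mem_union, Set.mem_setOf_eq, hω]
      omega
    rw [key i, key 0]
  intro i A
  have h1 : μ.map (W i) = μ.map (W 0) := by
    apply Measure.ext_of_singleton
    intro z
    rw [Measure.map_apply (hmeas i) (measurableSet_singleton z),
      Measure.map_apply (hmeas 0) (measurableSet_singleton z)]
    exact hsing i z
  have h2 := congrArg (fun m : Measure ℤ => m A) h1
  simpa [Measure.map_apply (hmeas i) (MeasurableSet.of_discrete (s := A)),
    Measure.map_apply (hmeas 0) (MeasurableSet.of_discrete (s := A))] using h2



lemma map_shift_eq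
    (hgen : (MeasurableSpace.pi : MeasurableSpace (ℕ → ℤ)) = MeasurableSpace.generateFrom boxes)
    (hpi : IsPiSystem boxes)
    (W : ℕ → Ω → ℤ) (hmeas : ∀ i, Measurable (W i))
    (hindep : iIndepFun W μ)
    (hmarg : ∀ i (A : Set ℤ), μ (W i ⁻¹' A) = μ (W 0 ⁻¹' A)) :
    μ.map (fun ω i => W (i + 1) ω) = μ.map (fun ω i => W i ω) := by
  have hΦ : Measurable (fun ω i => W i ω) := measurable_pi_lambda _ fun i => hmeas i
  have hΦ' : Measurable (fun ω i => W (i + 1) ω) := measurable_pi_lambda _ fun i => hmeas (i + 1)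
  haveI : IsProbabilityMeasure (μ.map (fun ω i => W i ω)) :=
    Measure.isProbabilityMeasure_map hΦ.aemeasurable
  haveI : IsProbabilityMeasure (μ.map (fun ω i => W (i + 1) ω)) :=
    Measure.isProbabilityMeasure_map hΦ'.aemeasurable
  refine ext_of_generate_finite boxes hgen hpi ?_ (by simp)
  rintro _ ⟨n, A, rfl⟩
  have hbox : MeasurableSet {w : ℕ → ℤ | ∀ i < n, w i ∈ A i} := by
    have : {w : ℕ → ℤ | ∀ i < n, w i ∈ A i} = ⋂ i ∈ Finset.range n, (fun w => w i) ⁻¹' A i := by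
      ext w; simp [Finset.mem_range]
    rw [this]
    exact Finset.measurableSet_biInter _ fun i _ =>
      (measurable_pi_apply i) MeasurableSet.of_discrete
  rw [Measure.map_apply hΦ' hbox, Measure.map_apply hΦ hbox]
  have hmem : ∀ (j : ℕ) (B : Set ℤ),
      MeasurableSet[(inferInstance : MeasurableSpace ℤ).comap (W j)] (W j ⁻¹' B) :=
    fun j B => ⟨B, MeasurableSet.of_discrete, rfl⟩
  -- unshifted side
  have e1 : (fun ω i => W i ω) ⁻¹' {w : ℕ → ℤ | ∀ i < n, w i ∈ A i}
      = ⋂ i ∈ Finset.range n, W i ⁻¹' A i := by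
    ext ω; simp [Finset.mem_range]
  -- shifted side
  have e2 : (fun ω i => W (i + 1) ω) ⁻¹' {w : ℕ → ℤ | ∀ i < n, w i ∈ A i}
      = ⋂ j ∈ (Finset.range n).image (· + 1), W j ⁻¹' A (j - 1) := by
    rw [Finset.set_biInter_finset_image]
    ext ω
    simp only [Set.mem_preimage, Set.mem_setOf_eq, Set.mem_iInter, Finset.mem_range]
    constructor
    · intro h i hi; simpa using h i hi
    · intro h i hi; simpa using h i hi
  rw [e1, e2, hindep.meas_biInter (fun i _ => hmem i (A i)),
    hindep.meas_biInter (fun j _ => hmem j (A (j - 1))),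
    Finset.prod_image (fun a _ b _ h => by omega)]
  refine Finset.prod_congr rfl fun i _ => ?_
  rw [hmarg (i + 1), hmarg i]
  norm_num


/-- The μ-event that the running `T'` maximum reaches `b`. -/
def P (W : ℕ → Ω → ℤ) (b : ℕ) : Set Ω :=
  {ω | ∃ i : ℕ, 1 ≤ i ∧
    (b : ℤ) ≤ (if W (i - 1) ω = 0 then 1 else 0) + ∑ j ∈ Finset.range i, W j ω}

lemma measurableSet_P (W : ℕ → Ω → ℤ) (hmeas : ∀ i, Measurable (W i)) (b : ℕ) :
    MeasurableSet (P W b) := by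
  have : P W b = ⋃ i : ℕ, ⋃ (_ : 1 ≤ i),
      (fun ω => (if W (i - 1) ω = 0 then (1 : ℤ) else 0) + ∑ j ∈ Finset.range i, W j ω) ⁻¹'
        Set.Ici (b : ℤ) := by
    ext ω; simp [P, Set.mem_Ici]
  rw [this]
  refine MeasurableSet.iUnion fun i => MeasurableSet.iUnion fun _ => ?_
  have hf : Measurable (fun ω =>
      (if W (i - 1) ω = 0 then (1 : ℤ) else 0) + ∑ j ∈ Finset.range i, W j ω) :=
    ((Measurable.of_discrete (f := fun z : ℤ => if z = 0 then (1 : ℤ) else 0)).comp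
      (hmeas (i - 1))).add (Finset.measurable_sum _ fun j _ => hmeas j)
  exact hf (MeasurableSet.of_discrete (s := Set.Ici (b : ℤ)))

lemma antitone_P (W : ℕ → Ω → ℤ) : Antitone (P W) := by
  intro b b' hbb ω hω
  obtain ⟨i, hi, hle⟩ := hω
  exact ⟨i, hi, le_trans (by exact_mod_cast hbb) hle⟩

lemma iInter_P_null (α₀ α₁ β₁ : ℝ) (hα₀ : 0 < α₀) (hα₁ : 0 ≤ α₁) (hβ₁ : 0 < β₁)
    (hsum : α₀ + α₁ + β₁ = 1) (hlt : β₁ < α₀)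
    (W : ℕ → Ω → ℤ) (hmeas : ∀ i, Measurable (W i))
    (hindep : iIndepFun W μ)
    (hm1 : μ {ω | W 0 ω = -1} = ENNReal.ofReal α₀)
    (hp1 : μ {ω | W 0 ω = 1} = ENNReal.ofReal β₁)
    (hmarg : ∀ i (A : Set ℤ), μ (W i ⁻¹' A) = μ (W 0 ⁻¹' A))
    (hae : ∀ᵐ ω ∂μ, W 0 ω = -1 ∨ W 0 ω = 0 ∨ W 0 ω = 1) :
    μ (⋂ b : ℕ, P W b) = 0 := by
  classical
  set X : ℕ → Ω → ℝ := fun i ω => ((W i ω : ℤ) : ℝ) with hX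
  have hXmeas : ∀ i, Measurable (X i) := fun i => Measurable.of_discrete.comp (hmeas i)
  have hcast : Measurable (fun z : ℤ => (z : ℝ)) := Measurable.of_discrete
  -- integrability of X 0
  have hbound : ∀ᵐ ω ∂μ, ‖X 0 ω‖ ≤ 1 := by
    filter_upwards [hae] with ω hω
    rcases hω with h | h | h <;> simp [hX, h]
  have hint : Integrable (X 0) μ :=
    ⟨(hXmeas 0).aestronglyMeasurable, HasFiniteIntegral.of_bounded hbound⟩
  -- pairwise independence
  have hpind : Pairwise (Function.onFun (IndepFun · · μ) X) := fun i j hij =>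
    (hindep.indepFun hij).comp hcast hcast
  -- identical distribution
  have hident : ∀ i, IdentDistrib (X i) (X 0) μ μ := by
    intro i
    have hWid : IdentDistrib (W i) (W 0) μ μ := by
      refine ⟨(hmeas i).aemeasurable, (hmeas 0).aemeasurable, ?_⟩
      refine Measure.ext fun A hA => ?_
      rw [Measure.map_apply (hmeas i) hA, Measure.map_apply (hmeas 0) hA, hmarg i]
    exact hWid.comp hcast
  -- the mean
  have hmean : μ[X 0] = β₁ - α₀ := by
    have hs1 : MeasurableSet {ω | W 0 ω = 1} := (hmeas 0) (MeasurableSet.of_discrete (s := {(1:ℤ)}))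
    have hsm1 : MeasurableSet {ω | W 0 ω = -1} :=
      (hmeas 0) (MeasurableSet.of_discrete (s := {(-1:ℤ)}))
    have hfeq : X 0 =ᵐ[μ] fun ω =>
        Set.indicator {ω | W 0 ω = 1} (fun _ => (1:ℝ)) ω -
          Set.indicator {ω | W 0 ω = -1} (fun _ => (1:ℝ)) ω := by
      filter_upwards [hae] with ω hω
      rcases hω with h | h | h <;>
        simp [hX, h, Set.indicator_apply, Set.mem_setOf_eq]
    rw [integral_congr_ae hfeq, integral_sub
      ((integrable_const (1:ℝ)).indicator hs1) ((integrable_const (1:ℝ)).indicator hsm1),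
      integral_indicator_const _ hs1, integral_indicator_const _ hsm1, measureReal_def, measureReal_def, hp1, hm1,
      ENNReal.toReal_ofReal hβ₁.le, ENNReal.toReal_ofReal hα₀.le]
    simp
  -- strong law
  have hslln := strong_law_ae X hint hpind hident
  rw [hmean] at hslln
  -- pathwise: on the SLLN event the intersection fails
  have hsub : (⋂ b : ℕ, P W b) ⊆
      {ω | ¬ Tendsto (fun n : ℕ => (n : ℝ)⁻¹ • ∑ i ∈ Finset.range n, X i ω) atTop
        (𝓝 (β₁ - α₀))} := by
    intro ω hω
    simp only [Set.mem_setOf_eq]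
    intro htend
    -- eventually the averages are < 0, hence partial sums are ≤ 0
    have hneg : ∀ᶠ (n : ℕ) in atTop, (n : ℝ)⁻¹ • ∑ i ∈ Finset.range n, X i ω < 0 :=
      htend.eventually_lt_const (by linarith)
    obtain ⟨N, hN⟩ := eventually_atTop.1 hneg
    have hSle : ∀ n : ℕ, N + 1 ≤ n → (∑ j ∈ Finset.range n, W j ω) ≤ 0 := by
      intro n hn
      have h1 := hN n (le_trans (Nat.le_succ N) hn)
      rw [smul_eq_mul] at h1
      have h2 : (∑ i ∈ Finset.range n, X i ω) < 0 := by
        by_contra h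
        push_neg at h
        have : 0 ≤ (n : ℝ)⁻¹ * ∑ i ∈ Finset.range n, X i ω :=
          mul_nonneg (by positivity) h
        linarith
      have h3 : ((∑ j ∈ Finset.range n, W j ω : ℤ) : ℝ) < 0 := by
        rwa [Int.cast_sum]
      exact_mod_cast h3.le
    -- bound on all partial sums
    set M : ℕ := (Finset.range (N + 2)).sup (fun n => (∑ j ∈ Finset.range n, W j ω).toNat)
      with hMdef
    have hSle' : ∀ n : ℕ, (∑ j ∈ Finset.range n, W j ω) ≤ (M : ℤ) := by
      intro n
      by_cases h : n ≤ N + 1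
      · refine le_trans (Int.self_le_toNat _) ?_
        exact_mod_cast Finset.le_sup (f := fun n => (∑ j ∈ Finset.range n, W j ω).toNat)
          (Finset.mem_range.2 (by omega))
      · exact le_trans (hSle n (by omega)) (Int.natCast_nonneg M)
    obtain ⟨i, hi, hle⟩ := Set.mem_iInter.1 hω (M + 2)
    have hind : (if W (i - 1) ω = 0 then (1:ℤ) else 0) ≤ 1 := by split <;> omega
    have h4 : ((M + 2 : ℕ) : ℤ) ≤ 1 + (M : ℤ) :=
      le_trans hle (add_le_add hind (hSle' i))
    push_cast at h4
    omega
  exact measure_mono_null hsub (ae_iff.1 hslln)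



lemma solve_rec (α₀ α₁ β₁ : ℝ) (hα₀ : 0 < α₀) (hα₁ : 0 ≤ α₁) (hβ₁ : 0 < β₁)
    (hsum : α₀ + α₁ + β₁ = 1) (hlt : β₁ < α₀)
    (G : ℕ → ℝ)
    (h1 : G 1 = α₀ * G 2 + α₁ + β₁)
    (hrec : ∀ b : ℕ, 1 ≤ b → G (b + 1) = α₀ * G (b + 2) + α₁ * G (b + 1) + β₁ * G b)
    (hlim : Tendsto G atTop (𝓝 0)) :
    ∀ a : ℕ, 1 ≤ a → G a = (β₁ / α₀) ^ (a - 1) * ((1 - α₀) / (1 - β₁)) := by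
  set r : ℝ := β₁ / α₀ with hr
  have hr0 : 0 < r := div_pos hβ₁ hα₀
  have hr1 : r < 1 := (div_lt_one hα₀).2 hlt
  set D : ℕ → ℝ := fun b => G b - G (b + 1) with hD
  have hstep : ∀ b : ℕ, 1 ≤ b → D (b + 1) = r * D b := by
    intro b hb
    have key : α₀ * D (b + 1) = β₁ * D b := by
      simp only [hD]
      linear_combination (hrec b hb) + G (b + 1) * hsum
    rw [hr]; field_simp [hα₀.ne']
    linarith [key]
  have hDgeom : ∀ k : ℕ, D (k + 1) = r ^ k * D 1 := by
    intro k
    induction k with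
    | zero => simp
    | succ k ih =>
      rw [hstep (k + 1) (by omega), ih]
      ring
  have htel : ∀ a n : ℕ, G (a + 1) - G (a + 1 + n) = (∑ k ∈ Finset.range n, r ^ (a + k)) * D 1 := by
    intro a n
    induction n with
    | zero => simp
    | succ n ih =>
      rw [Finset.sum_range_succ, add_mul, ← ih, ← hDgeom (a + n)]
      simp only [hD]
      have : a + 1 + (n + 1) = a + n + 1 + 1 := by omega
      rw [this]
      have : a + 1 + n = a + n + 1 := by omega
      rw [this]
      ring
  have hgeo : HasSum (fun k : ℕ => r ^ k) (1 - r)⁻¹ := hasSum_geometric_of_lt_one hr0.le hr1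
  have hGa : ∀ a : ℕ, G (a + 1) = r ^ a * ((1 - r)⁻¹ * D 1) := by
    intro a
    have hL : Tendsto (fun n : ℕ => G (a + 1) - G (a + 1 + n)) atTop (𝓝 (G (a + 1) - 0)) := by
      refine (tendsto_const_nhds).sub ?_
      have := hlim.comp (tendsto_add_atTop_nat (a + 1))
      convert this using 2 with n
      simp [Function.comp, Nat.add_comm]
    have hR : Tendsto (fun n : ℕ => (∑ k ∈ Finset.range n, r ^ (a + k)) * D 1) atTop
        (𝓝 (r ^ a * ((1 - r)⁻¹ * D 1))) := by
      have h2 : Tendsto (fun n : ℕ => ∑ k ∈ Finset.range n, r ^ k) atTop (𝓝 ((1 - r)⁻¹)) :=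
        hgeo.tendsto_sum_nat
      have h3 : Tendsto (fun n : ℕ => r ^ a * (∑ k ∈ Finset.range n, r ^ k) * D 1) atTop
          (𝓝 (r ^ a * (1 - r)⁻¹ * D 1)) := ((h2.const_mul _).mul_const _)
      convert h3 using 2 with n
      · rw [Finset.mul_sum]
        congr 1
        exact Finset.sum_congr rfl fun k _ => pow_add r a k
      · ring
    have hL' : Tendsto (fun n : ℕ => (∑ k ∈ Finset.range n, r ^ (a + k)) * D 1) atTop
        (𝓝 (G (a + 1) - 0)) := by
      refine hL.congr fun n => ?_
      exact htel a n
    rw [sub_zero] at hL'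
    exact (tendsto_nhds_unique hL' hR)
  -- boundary condition determines the constant
  set c : ℝ := (1 - r)⁻¹ * D 1 with hc
  have hβlt1 : 1 - β₁ > 0 := by linarith
  have hG1 : G 1 = c := by simpa using hGa 0
  have hG2 : G 2 = r * c := by simpa using hGa 1
  have hceq : c = (1 - α₀) / (1 - β₁) := by
    have h4 : c = α₀ * (r * c) + α₁ + β₁ := by
      have h4' := h1
      rw [hG1, hG2] at h4'
      exact h4'
    have h5 : α₀ * r = β₁ := by rw [hr]; field_simp [hα₀.ne']
    have h6 : c = β₁ * c + (1 - α₀) := by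
      rw [← mul_assoc, h5] at h4
      linarith
    field_simp
    linarith [h6]
  intro a ha
  obtain ⟨k, rfl⟩ : ∃ k, a = k + 1 := ⟨a - 1, by omega⟩
  have hk := hGa k
  rw [hceq] at hk
  simpa using hk


lemma mem_P_iff (W : ℕ → Ω → ℤ) (ω : Ω) (b : ℕ) :
    ω ∈ P W b ↔ ((b : ℤ) ≤ (if W 0 ω = 0 then 1 else 0) + W 0 ω) ∨
      (∃ k : ℕ, 1 ≤ k ∧ (b : ℤ) - W 0 ω ≤
        (if W (k - 1 + 1) ω = 0 then 1 else 0) + ∑ j ∈ Finset.range k, W (j + 1) ω) := by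
  constructor
  · rintro ⟨i, hi, hle⟩
    rcases Nat.lt_or_ge i 2 with h2 | h2
    · left
      have hi1 : i = 1 := by omega
      subst hi1
      simpa [Finset.sum_range_one] using hle
    · right
      obtain ⟨k, rfl⟩ : ∃ k, i = k + 1 := ⟨i - 1, by omega⟩
      have hk : 1 ≤ k := by omega
      refine ⟨k, hk, ?_⟩
      rw [Finset.sum_range_succ'] at hle
      have hkk : k - 1 + 1 = k := by omega
      rw [hkk]
      have h3 : k + 1 - 1 = k := by omega
      rw [h3] at hle
      linarith
  · rintro (h | ⟨k, hk, hle⟩)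
    · exact ⟨1, le_refl 1, by simpa [Finset.sum_range_one] using h⟩
    · refine ⟨k + 1, by omega, ?_⟩
      rw [Finset.sum_range_succ']
      have hkk : k - 1 + 1 = k := by omega
      rw [hkk] at hle
      have h3 : k + 1 - 1 = k := by omega
      rw [h3]
      linarith

lemma P_inter_eq (W : ℕ → Ω → ℤ) (b c : ℕ) (w : ℤ)
    (hno : ¬ ((b : ℤ) ≤ (if w = 0 then 1 else 0) + w))
    (hbc : (b : ℤ) - w = (c : ℤ)) :
    P W b ∩ {ω | W 0 ω = w} = P (fun j => W (j + 1)) c ∩ {ω | W 0 ω = w} := by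
  have hmem : ∀ ω : Ω, ω ∈ P (fun j => W (j + 1)) c ↔
      ∃ k : ℕ, 1 ≤ k ∧ (c : ℤ) ≤
        (if W (k - 1 + 1) ω = 0 then 1 else 0) + ∑ j ∈ Finset.range k, W (j + 1) ω :=
    fun ω => Iff.rfl
  ext ω
  simp only [Set.mem_inter_iff, Set.mem_setOf_eq]
  constructor
  · rintro ⟨hP, hw⟩
    refine ⟨?_, hw⟩
    rcases (mem_P_iff W ω b).1 hP with h | ⟨k, hk, hle⟩
    · rw [hw] at h; exact absurd h hno
    · refine (hmem ω).2 ⟨k, hk, ?_⟩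
      rw [hw, hbc] at hle
      exact hle
  · rintro ⟨hP, hw⟩
    refine ⟨?_, hw⟩
    obtain ⟨k, hk, hle⟩ := (hmem ω).1 hP
    refine (mem_P_iff W ω b).2 (Or.inr ⟨k, hk, ?_⟩)
    rw [hw, hbc]
    exact hle

lemma subset_P_one_zero (W : ℕ → Ω → ℤ) : {ω | W 0 ω = 0} ⊆ P W 1 := by
  intro ω h
  simp only [Set.mem_setOf_eq] at h
  exact ⟨1, le_refl 1, by simp [Finset.sum_range_one, h]⟩

lemma subset_P_one_one (W : ℕ → Ω → ℤ) : {ω | W 0 ω = 1} ⊆ P W 1 := by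
  intro ω h
  simp only [Set.mem_setOf_eq] at h
  exact ⟨1, le_refl 1, by simp [Finset.sum_range_one, h]⟩

lemma indep_P_W0 (W : ℕ → Ω → ℤ) (hmeas : ∀ i, Measurable (W i))
    (hindep : iIndepFun W μ) (c : ℕ) (w : ℤ) :
    μ (P (fun j => W (j + 1)) c ∩ {ω | W 0 ω = w})
      = μ (P (fun j => W (j + 1)) c) * μ {ω | W 0 ω = w} := by
  have h := indep_biSup_compl (fun n => (hmeas n).comap_le) hindep.iIndep ({0}ᶜ : Set ℕ)
  have hle' : ∀ j : ℕ, MeasurableSpace.comap (W (j + 1)) inferInstance ≤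
      ⨆ n ∈ ({0}ᶜ : Set ℕ), MeasurableSpace.comap (W n) inferInstance := fun j =>
    le_biSup (fun n => MeasurableSpace.comap (W n) inferInstance)
      (show (j + 1 : ℕ) ∈ ({0}ᶜ : Set ℕ) by simp)
  have hW' : ∀ j : ℕ,
      Measurable[⨆ n ∈ ({0}ᶜ : Set ℕ), MeasurableSpace.comap (W n) inferInstance] (W (j + 1)) :=
    fun j => Measurable.of_comap_le (hle' j)
  have h1 : MeasurableSet[⨆ n ∈ ({0}ᶜ : Set ℕ), MeasurableSpace.comap (W n) inferInstance]
      (P (fun j => W (j + 1)) c) :=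
    @measurableSet_P Ω (⨆ n ∈ ({0}ᶜ : Set ℕ), MeasurableSpace.comap (W n) inferInstance)
      (fun j => W (j + 1)) hW' c
  have hle0 : MeasurableSpace.comap (W 0) inferInstance ≤
      ⨆ n ∈ ((({0}ᶜ)ᶜ) : Set ℕ), MeasurableSpace.comap (W n) inferInstance :=
    le_biSup (fun n => MeasurableSpace.comap (W n) inferInstance)
      (show (0 : ℕ) ∈ ((({0}ᶜ)ᶜ) : Set ℕ) by simp)
  have hW0 :
      Measurable[⨆ n ∈ ((({0}ᶜ)ᶜ) : Set ℕ), MeasurableSpace.comap (W n) inferInstance] (W 0) :=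
    Measurable.of_comap_le hle0
  have h2 : MeasurableSet[⨆ n ∈ ((({0}ᶜ)ᶜ) : Set ℕ), MeasurableSpace.comap (W n) inferInstance]
      {ω | W 0 ω = w} := hW0 (MeasurableSet.of_discrete (s := {w}))
  exact (Indep_iff _ _ _).1 h _ _ h1 h2

lemma measure_P_decomp (W : ℕ → Ω → ℤ) (hmeas : ∀ i, Measurable (W i))
    (hcompl : μ ({ω | W 0 ω = -1} ∪ {ω | W 0 ω = 0} ∪ {ω | W 0 ω = 1})ᶜ = 0) (b : ℕ) :
    μ (P W b) = μ (P W b ∩ {ω | W 0 ω = -1}) + μ (P W b ∩ {ω | W 0 ω = 0})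
      + μ (P W b ∩ {ω | W 0 ω = 1}) := by
  have hAset : ∀ (z : ℤ), MeasurableSet {ω | W 0 ω = z} := fun z =>
    (hmeas 0) (MeasurableSet.of_discrete (s := {z}))
  have hd1 : Disjoint (P W b ∩ {ω | W 0 ω = -1}) (P W b ∩ {ω | W 0 ω = 0}) := by
    rw [Set.disjoint_left]
    rintro ω ⟨-, h1⟩ ⟨-, h2⟩
    simp only [Set.mem_setOf_eq] at h1 h2
    omega
  have hd2 : Disjoint (P W b ∩ {ω | W 0 ω = -1} ∪ P W b ∩ {ω | W 0 ω = 0})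
      (P W b ∩ {ω | W 0 ω = 1}) := by
    rw [Set.disjoint_left]
    rintro ω h1 ⟨-, h2⟩
    simp only [Set.mem_union, Set.mem_inter_iff, Set.mem_setOf_eq] at h1 h2
    omega
  have e1 : μ (P W b) = μ (P W b ∩ ({ω | W 0 ω = -1} ∪ {ω | W 0 ω = 0} ∪ {ω | W 0 ω = 1})) :=
    (measure_inter_conull hcompl).symm
  rw [e1, Set.inter_union_distrib_left, Set.inter_union_distrib_left,
    measure_union hd2 ((measurableSet_P W hmeas b).inter (hAset 1)),
    measure_union hd1 ((measurableSet_P W hmeas b).inter (hAset 0))]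

end LazyRW


/-- Lazy random walk with steps `W_i ∈ {-1,0,1}` of probabilities `α₀, α₁, β₁`, `β₁ < α₀`.
With `T'_i = 𝟙{W_i = 0} + ∑_{j=1}^i W_j`, for every `a ≥ 1`:
`P(max_{i≥1} T'_i ≥ a) = (β₁/α₀)^{a-1} (1-α₀)/(1-β₁)`. -/
theorem lazy_rw_max_Tprime {Ω : Type*} [MeasurableSpace Ω] (μ : Measure Ω)
    [IsProbabilityMeasure μ]
    (α₀ α₁ β₁ : ℝ) (hα₀ : 0 < α₀) (hα₁ : 0 ≤ α₁) (hβ₁ : 0 < β₁)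
    (hsum : α₀ + α₁ + β₁ = 1) (hlt : β₁ < α₀)
    (W : ℕ → Ω → ℤ) (hmeas : ∀ i, Measurable (W i))
    (hindep : iIndepFun W μ)
    (hm1 : ∀ i, μ {ω | W i ω = -1} = ENNReal.ofReal α₀)
    (h0 : ∀ i, μ {ω | W i ω = 0} = ENNReal.ofReal α₁)
    (hp1 : ∀ i, μ {ω | W i ω = 1} = ENNReal.ofReal β₁)
    (a : ℕ) (ha : 1 ≤ a) :
    μ {ω | ∃ i : ℕ, 1 ≤ i ∧
        (a : ℤ) ≤ (if W (i - 1) ω = 0 then 1 else 0) + ∑ j ∈ Finset.range i, W j ω}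
      = ENNReal.ofReal ((β₁ / α₀) ^ (a - 1) * ((1 - α₀) / (1 - β₁))) := by
  classical
  open LazyRW in
  have hmarg := LazyRW.marg_eq α₀ α₁ β₁ hα₀ hα₁ hβ₁ hsum W hmeas hm1 h0 hp1
  -- the three values exhaust everything a.s.
  have hAset : ∀ (z : ℤ), MeasurableSet {ω | W 0 ω = z} := fun z =>
    (hmeas 0) (MeasurableSet.of_discrete (s := {z}))
  have hd1 : Disjoint {ω | W 0 ω = -1} {ω | W 0 ω = 0} := by
    rw [Set.disjoint_left]; intro ω h h'
    simp only [Set.mem_setOf_eq] at h h'; omega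
  have hd2 : Disjoint ({ω | W 0 ω = -1} ∪ {ω | W 0 ω = 0}) {ω | W 0 ω = 1} := by
    rw [Set.disjoint_left]; intro ω h h'
    simp only [Set.mem_union, Set.mem_setOf_eq] at h h'; omega
  have hU : μ ({ω | W 0 ω = -1} ∪ {ω | W 0 ω = 0} ∪ {ω | W 0 ω = 1}) = 1 := by
    rw [measure_union hd2 (hAset 1), measure_union hd1 (hAset 0), hm1 0, h0 0, hp1 0,
      ← ENNReal.ofReal_add hα₀.le hα₁, ← ENNReal.ofReal_add (by linarith) hβ₁.le, hsum,
      ENNReal.ofReal_one]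
  have hcompl : μ ({ω | W 0 ω = -1} ∪ {ω | W 0 ω = 0} ∪ {ω | W 0 ω = 1})ᶜ = 0 := by
    rw [measure_compl (((hAset (-1)).union (hAset 0)).union (hAset 1))
      (by rw [hU]; exact ENNReal.one_ne_top), measure_univ, hU, tsub_self]
  have hae : ∀ᵐ ω ∂μ, W 0 ω = -1 ∨ W 0 ω = 0 ∨ W 0 ω = 1 := by
    rw [ae_iff]
    refine measure_mono_null ?_ hcompl
    intro ω h
    simp only [Set.mem_setOf_eq] at h
    simp only [Set.mem_compl_iff, Set.mem_union, Set.mem_setOf_eq]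
    tauto
  -- shift invariance
  have hΦ : Measurable (fun ω i => W i ω) := measurable_pi_lambda _ fun i => hmeas i
  have hΦ' : Measurable (fun ω i => W (i + 1) ω) := measurable_pi_lambda _ fun i => hmeas (i + 1)
  have hshift : ∀ b : ℕ, μ (LazyRW.P (fun j => W (j + 1)) b) = μ (LazyRW.P W b) := by
    have hmapeq := LazyRW.map_shift_eq LazyRW.generateFrom_boxes LazyRW.isPiSystem_boxes
      W hmeas hindep hmarg
    intro b
    have hE : MeasurableSet (LazyRW.P (fun i (w : ℕ → ℤ) => w i) b) :=
      LazyRW.measurableSet_P _ (fun i => measurable_pi_apply i) b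
    have e1 : LazyRW.P (fun j => W (j + 1)) b
        = (fun ω i => W (i + 1) ω) ⁻¹' (LazyRW.P (fun i (w : ℕ → ℤ) => w i) b) := rfl
    have e2 : LazyRW.P W b = (fun ω i => W i ω) ⁻¹' (LazyRW.P (fun i (w : ℕ → ℤ) => w i) b) := rfl
    rw [e1, e2, ← Measure.map_apply hΦ' hE, ← Measure.map_apply hΦ hE, hmapeq]
  -- the ENNReal recursion
  have hrec_e : ∀ b : ℕ, 1 ≤ b → μ (LazyRW.P W (b + 1))
      = ENNReal.ofReal α₀ * μ (LazyRW.P W (b + 2))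
        + ENNReal.ofReal α₁ * μ (LazyRW.P W (b + 1)) + ENNReal.ofReal β₁ * μ (LazyRW.P W b) := by
    intro b hb
    have hdec := LazyRW.measure_P_decomp W hmeas hcompl (b + 1)
    have t1 : μ (LazyRW.P W (b + 1) ∩ {ω | W 0 ω = -1})
        = ENNReal.ofReal α₀ * μ (LazyRW.P W (b + 2)) := by
      rw [LazyRW.P_inter_eq W (b + 1) (b + 2) (-1)
        (by push_cast [if_neg (show ¬ (-1:ℤ) = 0 by norm_num)]; first | omega | simp) (by push_cast; try ring),
        LazyRW.indep_P_W0 W hmeas hindep (b + 2) (-1), hshift (b + 2), hm1 0, mul_comm]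
    have t2 : μ (LazyRW.P W (b + 1) ∩ {ω | W 0 ω = 0})
        = ENNReal.ofReal α₁ * μ (LazyRW.P W (b + 1)) := by
      rw [LazyRW.P_inter_eq W (b + 1) (b + 1) 0
        (by push_cast [if_pos rfl]; first | omega | simp) (by push_cast; try ring),
        LazyRW.indep_P_W0 W hmeas hindep (b + 1) 0, hshift (b + 1), h0 0, mul_comm]
    have t3 : μ (LazyRW.P W (b + 1) ∩ {ω | W 0 ω = 1})
        = ENNReal.ofReal β₁ * μ (LazyRW.P W b) := by
      rw [LazyRW.P_inter_eq W (b + 1) b 1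
        (by push_cast [if_neg (show ¬ (1:ℤ) = 0 by norm_num)]; first | omega | simp) (by push_cast; try ring),
        LazyRW.indep_P_W0 W hmeas hindep b 1, hshift b, hp1 0, mul_comm]
    rw [t1, t2, t3] at hdec
    exact hdec
  have h1_e : μ (LazyRW.P W 1) = ENNReal.ofReal α₀ * μ (LazyRW.P W 2)
      + ENNReal.ofReal α₁ + ENNReal.ofReal β₁ := by
    have hdec := LazyRW.measure_P_decomp W hmeas hcompl 1
    have t1 : μ (LazyRW.P W 1 ∩ {ω | W 0 ω = -1})
        = ENNReal.ofReal α₀ * μ (LazyRW.P W 2) := by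
      rw [LazyRW.P_inter_eq W 1 2 (-1)
        (by push_cast [if_neg (show ¬ (-1:ℤ) = 0 by norm_num)]; first | omega | simp) (by push_cast; try ring),
        LazyRW.indep_P_W0 W hmeas hindep 2 (-1), hshift 2, hm1 0, mul_comm]
    have t2 : μ (LazyRW.P W 1 ∩ {ω | W 0 ω = 0}) = ENNReal.ofReal α₁ := by
      rw [Set.inter_eq_right.mpr (LazyRW.subset_P_one_zero W), h0 0]
    have t3 : μ (LazyRW.P W 1 ∩ {ω | W 0 ω = 1}) = ENNReal.ofReal β₁ := by
      rw [Set.inter_eq_right.mpr (LazyRW.subset_P_one_one W), hp1 0]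
    rw [t1, t2, t3] at hdec
    exact hdec
  -- pass to real numbers
  set G : ℕ → ℝ := fun b => (μ (LazyRW.P W b)).toReal with hGdef
  have hfin : ∀ s : Set Ω, μ s ≠ ⊤ := fun s => measure_ne_top μ s
  have hmul_fin : ∀ (x : ℝ) (s : Set Ω), ENNReal.ofReal x * μ s ≠ ⊤ := fun x s =>
    ENNReal.mul_ne_top ENNReal.ofReal_ne_top (hfin s)
  have hGrec : ∀ b : ℕ, 1 ≤ b → G (b + 1) = α₀ * G (b + 2) + α₁ * G (b + 1) + β₁ * G b := by
    intro b hb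
    have h' := congrArg ENNReal.toReal (hrec_e b hb)
    rw [ENNReal.toReal_add (ENNReal.add_ne_top.2 ⟨hmul_fin _ _, hmul_fin _ _⟩) (hmul_fin _ _),
      ENNReal.toReal_add (hmul_fin _ _) (hmul_fin _ _), ENNReal.toReal_mul, ENNReal.toReal_mul,
      ENNReal.toReal_mul, ENNReal.toReal_ofReal hα₀.le, ENNReal.toReal_ofReal hα₁,
      ENNReal.toReal_ofReal hβ₁.le] at h'
    exact h'
  have hG1 : G 1 = α₀ * G 2 + α₁ + β₁ := by
    have h' := congrArg ENNReal.toReal h1_e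
    rw [ENNReal.toReal_add (ENNReal.add_ne_top.2 ⟨hmul_fin _ _, ENNReal.ofReal_ne_top⟩)
      ENNReal.ofReal_ne_top,
      ENNReal.toReal_add (hmul_fin _ _) ENNReal.ofReal_ne_top, ENNReal.toReal_mul,
      ENNReal.toReal_ofReal hα₀.le, ENNReal.toReal_ofReal hα₁,
      ENNReal.toReal_ofReal hβ₁.le] at h'
    exact h'
  -- the limit
  have hnull := LazyRW.iInter_P_null α₀ α₁ β₁ hα₀ hα₁ hβ₁ hsum hlt W hmeas hindep
    (hm1 0) (hp1 0) hmarg hae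
  have hlimμ : Tendsto (fun b : ℕ => μ (LazyRW.P W b)) atTop (𝓝 0) := by
    have h := tendsto_measure_iInter_atTop (μ := μ)
      (fun b => (LazyRW.measurableSet_P W hmeas b).nullMeasurableSet)
      (LazyRW.antitone_P W) ⟨0, hfin _⟩
    rw [hnull] at h
    exact h
  have hGlim : Tendsto G atTop (𝓝 0) := by
    have h := (ENNReal.tendsto_toReal (a := 0) (by simp)).comp hlimμ
    exact h
  have hsolve := LazyRW.solve_rec α₀ α₁ β₁ hα₀ hα₁ hβ₁ hsum hlt G hG1 hGrec hGlim a ha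
  show μ (LazyRW.P W a) = _
  rw [← ENNReal.ofReal_toReal (hfin (LazyRW.P W a))]
  exact congrArg ENNReal.ofReal hsolve
end

section
/- Let ᾱ_j = α e^{-λΔ} (λΔ)^j/j! for j ≥ 0, ā_i = ∑_{j≥i} ᾱ_j + β·𝟙{i≤2}, b̄_i = ∑_{j≥i} ᾱ_j + β·𝟙{i≤1}, with α+β=1. If a probability distribution (π_i)_{i≥0} satisfies the Ramaswami recursion π_i = (π₀ b̄_i + ∑_{j=1}^{i-1} π_j ā_{i+1-j})/(1-ā₁) for i ≥ 1 and ∑_{i≥0} π_i = 1, then π₀ = (1 - 2β - αλΔ)/α, provided 1 > 2β + αλΔ. -/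
open Finset in
private lemma tail_hasSum_aux (c : ℕ → ℝ) (hc : ∀ i : ℕ, Summable fun j => c (i + j))
    (hF : Summable fun p : ℕ × ℕ => c (p.1 + 1 + p.2)) :
    HasSum (fun i => ∑' j, c (i + 1 + j)) (∑' n : ℕ, ((n : ℝ) + 1) * c (n + 1)) := by
  have hfib : ∀ i : ℕ, HasSum (fun j => c (i + 1 + j)) (∑' j, c (i + 1 + j)) :=
    fun i => (hc (i + 1)).hasSum
  have key : HasSum (fun i => ∑' j, c (i + 1 + j)) (∑' p : ℕ × ℕ, c (p.1 + 1 + p.2)) :=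
    hF.hasSum.prod_fiberwise hfib
  have hsig : ∑' p : ℕ × ℕ, c (p.1 + 1 + p.2)
      = ∑' n : ℕ, ∑ kl ∈ Finset.HasAntidiagonal.antidiagonal n, c (kl.1 + 1 + kl.2) := by
    conv_rhs => congr; ext; rw [← Finset.sum_finset_coe, ← tsum_fintype (L := SummationFilter.unconditional _)]
    rw [← Finset.HasAntidiagonal.sigmaAntidiagonalEquivProd.tsum_eq (fun p : ℕ × ℕ => c (p.1 + 1 + p.2))]
    exact Summable.tsum_sigma' (fun n => (hasSum_fintype _).summable)
      (Finset.HasAntidiagonal.sigmaAntidiagonalEquivProd.summable_iff.mpr hF)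
  have hanti : ∀ n : ℕ, ∑ kl ∈ Finset.HasAntidiagonal.antidiagonal n, c (kl.1 + 1 + kl.2)
      = ((n : ℝ) + 1) * c (n + 1) := by
    intro n
    have h1 : ∀ kl ∈ Finset.HasAntidiagonal.antidiagonal n, c (kl.1 + 1 + kl.2) = c (n + 1) := by
      intro kl h; rw [Finset.HasAntidiagonal.mem_antidiagonal] at h
      congr 1; omega
    rw [Finset.sum_congr rfl h1, Finset.sum_const, Finset.Nat.card_antidiagonal,
      nsmul_eq_mul]
    push_cast; ring
  rw [hsig, tsum_congr hanti] at key
  exact key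

private lemma expF_summable_aux (K d : ℝ) (hK : 0 ≤ K) (hd : 0 ≤ d) :
    Summable fun p : ℕ × ℕ => K * d ^ (p.1 + 1 + p.2) / (Nat.factorial (p.1 + 1 + p.2) : ℝ) := by
  have hM : Summable fun p : ℕ × ℕ =>
      (K * d) * ((d ^ p.1 / (Nat.factorial p.1 : ℝ)) * (d ^ p.2 / (Nat.factorial p.2 : ℝ))) := by
    refine Summable.mul_left _ ?_
    exact (Real.summable_pow_div_factorial d).mul_of_nonneg
      (Real.summable_pow_div_factorial d)
      (fun n => by positivity) (fun n => by positivity)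
  refine Summable.of_nonneg_of_le (fun p => by positivity) (fun p => ?_) hM
  obtain ⟨i, j⟩ := p
  have hfact : ((Nat.factorial i : ℝ) * (Nat.factorial j : ℝ)) ≤ (Nat.factorial (i + 1 + j) : ℝ) := by
    have h1 : Nat.factorial i * Nat.factorial j ≤ Nat.factorial (i + j) :=
      Nat.le_of_dvd (Nat.factorial_pos _) (Nat.factorial_mul_factorial_dvd_factorial_add i j)
    have h2 : Nat.factorial (i + j) ≤ Nat.factorial (i + 1 + j) :=
      Nat.factorial_le (by omega)
    exact_mod_cast le_trans h1 h2
  have heq : (K * d) * ((d ^ i / (Nat.factorial i : ℝ)) * (d ^ j / (Nat.factorial j : ℝ)))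
      = K * d ^ (i + 1 + j) / ((Nat.factorial i : ℝ) * (Nat.factorial j : ℝ)) := by
    rw [pow_add, pow_add]
    field_simp
  simp only [heq]
  gcongr



/-- Ramaswami recursion for the rigged model: with `ᾱ_j = α e^{-λΔ} (λΔ)ʲ/j!`,
`ā_i = ∑_{j≥i} ᾱ_j + β 𝟙{i≤2}`, `b̄_i = ∑_{j≥i} ᾱ_j + β 𝟙{i≤1}`, if the probability
distribution `π` satisfies `π_i = (π₀ b̄_i + ∑_{j=1}^{i-1} π_j ā_{i+1-j})/(1-ā₁)` for
`i ≥ 1`, then `π₀ = (1 - 2β - αλΔ)/α`, provided `1 > 2β + αλΔ`.  Here `d` is `λΔ`. -/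
theorem ramaswami_pi0_rigged (α β d : ℝ) (hα : 0 < α) (hβ : 0 < β) (hαβ : α + β = 1)
    (hd : 0 ≤ d) (hcond : 2 * β + α * d < 1)
    (abar bbar : ℕ → ℝ)
    (habar : ∀ i, abar i =
      (∑' j : ℕ, α * Real.exp (-d) * d ^ (i + j) / (Nat.factorial (i + j) : ℝ)) +
        (if i ≤ 2 then β else 0))
    (hbbar : ∀ i, bbar i =
      (∑' j : ℕ, α * Real.exp (-d) * d ^ (i + j) / (Nat.factorial (i + j) : ℝ)) +
        (if i ≤ 1 then β else 0))
    (π : ℕ → ℝ) (hnn : ∀ i, 0 ≤ π i) (htot : ∑' i : ℕ, π i = 1)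
    (hrec : ∀ i : ℕ, 1 ≤ i →
      π i = (π 0 * bbar i + ∑ j ∈ Finset.Ico 1 i, π j * abar (i + 1 - j)) / (1 - abar 1)) :
    π 0 = (1 - 2 * β - α * d) / α := by
  -- basic objects
  set c : ℕ → ℝ := fun n => α * Real.exp (-d) * d ^ n / (Nat.factorial n : ℝ) with hc_def
  set T : ℕ → ℝ := fun i => ∑' j : ℕ, c (i + j) with hT_def
  have hK : 0 < α * Real.exp (-d) := mul_pos hα (Real.exp_pos _)
  have hc_nn : ∀ n, 0 ≤ c n := fun n => by positivity
  have hc_eq : c = fun n => (α * Real.exp (-d)) * (d ^ n / (Nat.factorial n : ℝ)) :=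
    funext fun n => mul_div_assoc _ _ _
  have hc_sum : Summable c := by
    rw [hc_eq]; exact (Real.summable_pow_div_factorial d).mul_left _
  have hc_tot : ∑' n, c n = α := by
    rw [hc_eq, tsum_mul_left]
    have hexp : ∑' n : ℕ, d ^ n / (Nat.factorial n : ℝ) = Real.exp d := by
      rw [Real.exp_eq_exp_ℝ, NormedSpace.exp_eq_tsum_div]
    rw [hexp, Real.exp_neg]
    field_simp
  -- fiber summability
  have hfiber : ∀ i : ℕ, Summable fun j => c (i + j) := by
    intro i
    have := (summable_nat_add_iff (f := c) i).mpr hc_sum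
    simpa [add_comm] using this
  have hT_nn : ∀ i, 0 ≤ T i := fun i => tsum_nonneg fun j => hc_nn _
  -- shift identity
  have hshift : ∀ m : ℕ, ((m : ℝ) + 1) * c (m + 1) = d * c m := by
    intro m
    have hm : (Nat.factorial m : ℝ) ≠ 0 := by exact_mod_cast (Nat.factorial_pos m).ne'
    simp only [hc_def, Nat.factorial_succ]
    push_cast
    field_simp
    ring
  -- the tail fubini fact
  have hF : Summable fun p : ℕ × ℕ => c (p.1 + 1 + p.2) :=
    expF_summable_aux (α * Real.exp (-d)) d hK.le hd
  have htail : HasSum (fun i => T (i + 1)) (α * d) := by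
    have h0 := tail_hasSum_aux c hfiber hF
    have hval : ∑' n : ℕ, ((n : ℝ) + 1) * c (n + 1) = α * d := by
      rw [tsum_congr hshift, tsum_mul_left, hc_tot]; ring
    rwa [hval] at h0
  have hT1sum : Summable fun i => T (i + 1) := htail.summable
  have hT1tot : ∑' i, T (i + 1) = α * d := htail.tsum_eq
  -- T 1 ≤ α * d  and  abar 1 < 1
  have habar1 : abar 1 = T 1 + β := by
    rw [habar 1]; norm_num; rfl
  have hT1le : T 1 ≤ α * d := by
    rw [← hT1tot]
    have h0 : T 1 = (fun i => T (i + 1)) 0 := by norm_num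
    rw [h0]
    exact Summable.le_tsum hT1sum 0 fun j _ => hT_nn _
  have habar1_lt : abar 1 < 1 := by rw [habar1]; nlinarith
  have hne : (1 : ℝ) - abar 1 ≠ 0 := by nlinarith
  -- π summable
  have hπ_sum : Summable π := by
    by_contra h
    rw [tsum_eq_zero_of_not_summable h] at htot
    norm_num at htot
  have hπ1_sum : Summable fun i => π (i + 1) := (summable_nat_add_iff 1).mpr hπ_sum
  have hπ1_tot : ∑' i, π (i + 1) = 1 - π 0 := by
    have := Summable.tsum_eq_zero_add hπ_sum
    rw [htot] at this
    linarith
  have hπ1HS : HasSum (fun i => π (i + 1)) (1 - π 0) := hπ1_tot ▸ hπ1_sum.hasSum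
  -- bbar decomposition
  have hbfun : (fun i => bbar (i + 1)) = fun i => T (i + 1) + (if i = 0 then β else 0) := by
    funext i
    rw [hbbar]
    congr 1
    exact if_congr (by omega) rfl rfl
  have hbHS : HasSum (fun i => bbar (i + 1)) (α * d + β) := by
    rw [hbfun]
    exact htail.add (hasSum_ite_eq 0 β)
  -- abar shifted decomposition
  have hT2sum : Summable fun m => T (m + 2) := by
    have := (summable_nat_add_iff (f := fun i => T (i + 1)) 1).mpr hT1sum
    simpa [add_assoc] using this
  have hT2tot : ∑' m, T (m + 2) = α * d - T 1 := by
    have h := Summable.tsum_eq_zero_add hT1sum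
    rw [hT1tot] at h
    have h2 : ∑' m, T (m + 1 + 1) = ∑' m, T (m + 2) := by norm_num
    rw [h2] at h
    linarith
  have hgfun : (fun m => abar (m + 2)) = fun m => T (m + 2) + (if m = 0 then β else 0) := by
    funext m
    rw [habar]
    congr 1
    exact if_congr (by omega) rfl rfl
  have hgHS : HasSum (fun m => abar (m + 2)) (α * d - T 1 + β) := by
    rw [hgfun]
    have := (hT2tot ▸ hT2sum.hasSum : HasSum (fun m => T (m + 2)) (α * d - T 1))
    exact this.add (hasSum_ite_eq 0 β)
  have hite_nn : ∀ (P : Prop) (_ : Decidable P), 0 ≤ if P then β else 0 := by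
    intro P _; split_ifs <;> simp [hβ.le]
  have hg_nn : ∀ m, 0 ≤ abar (m + 2) := fun m => by
    rw [habar]
    exact add_nonneg (tsum_nonneg fun j => hc_nn _) (hite_nn _ _)
  -- main recursion, multiplied out
  set Q : ℕ → ℝ := fun i => ∑ j ∈ Finset.Ico 1 i, π j * abar (i + 1 - j) with hQ_def
  have habar_nn : ∀ i, 0 ≤ abar i := fun i => by
    rw [habar]
    exact add_nonneg (tsum_nonneg fun j => hc_nn _) (hite_nn _ _)
  have hbbar_nn : ∀ i, 0 ≤ bbar i := fun i => by
    rw [hbbar]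
    exact add_nonneg (tsum_nonneg fun j => hc_nn _) (hite_nn _ _)
  have hQ_nn : ∀ i, 0 ≤ Q i := fun i =>
    Finset.sum_nonneg fun j _ => mul_nonneg (hnn j) (habar_nn _)
  have h1 : ∀ i : ℕ, π (i + 1) * (1 - abar 1) = π 0 * bbar (i + 1) + Q (i + 1) := by
    intro i
    have := hrec (i + 1) (by omega)
    rw [eq_div_iff hne] at this
    exact this
  -- summability of pieces
  have hLHS : Summable fun i => π (i + 1) * (1 - abar 1) := hπ1_sum.mul_right _
  have hQ1_sum : Summable fun i => Q (i + 1) := by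
    refine Summable.of_nonneg_of_le (fun i => hQ_nn _) (fun i => ?_) hLHS
    have := h1 i
    nlinarith [mul_nonneg (hnn 0) (hbbar_nn (i + 1))]
  have hQ2_sum : Summable fun n => Q (n + 2) := by
    have := (summable_nat_add_iff (f := fun i => Q (i + 1)) 1).mpr hQ1_sum
    simpa [add_assoc] using this
  -- Cauchy product for the Q part
  have hnorm_f : Summable fun k => ‖π (k + 1)‖ := by
    have : (fun k => ‖π (k + 1)‖) = fun k => π (k + 1) :=
      funext fun k => by rw [Real.norm_eq_abs, abs_of_nonneg (hnn _)]
    rw [this]; exact hπ1_sum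
  have hnorm_g : Summable fun m => ‖abar (m + 2)‖ := by
    have : (fun m => ‖abar (m + 2)‖) = fun m => abar (m + 2) :=
      funext fun m => by rw [Real.norm_eq_abs, abs_of_nonneg (hg_nn _)]
    rw [this]; exact hgHS.summable
  have hcauchy :
      ((∑' k, π (k + 1)) * ∑' m, abar (m + 2))
        = ∑' n, ∑ k ∈ Finset.range (n + 1), π (k + 1) * abar (n - k + 2) :=
    tsum_mul_tsum_eq_tsum_sum_range_of_summable_norm hnorm_f hnorm_g
  have hQrange : ∀ n : ℕ,
      Q (n + 2) = ∑ k ∈ Finset.range (n + 1), π (k + 1) * abar (n - k + 2) := by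
    intro n
    show ∑ j ∈ Finset.Ico 1 (n + 2), π j * abar (n + 2 + 1 - j)
      = ∑ k ∈ Finset.range (n + 1), π (k + 1) * abar (n - k + 2)
    rw [Finset.sum_Ico_eq_sum_range]
    refine Finset.sum_congr (by norm_num) fun k hk => ?_
    rw [Finset.mem_range] at hk
    congr 2 <;> omega
  have hQ2tot : ∑' n, Q (n + 2) = (1 - π 0) * (α * d - T 1 + β) := by
    rw [tsum_congr hQrange, ← hcauchy, hπ1_tot, hgHS.tsum_eq]
  have hQ1tot : ∑' i, Q (i + 1) = (1 - π 0) * (α * d - T 1 + β) := by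
    have h := Summable.tsum_eq_zero_add hQ1_sum
    have hQ1 : Q 1 = 0 := by rw [hQ_def]; simp
    have h2 : ∑' n, Q (n + 1 + 1) = ∑' n, Q (n + 2) := by norm_num
    rw [hQ1, h2, hQ2tot, zero_add] at h
    exact h
  -- sum the recursion
  have hEq : (1 - π 0) * (1 - abar 1)
      = π 0 * (α * d + β) + (1 - π 0) * (α * d - T 1 + β) := by
    have hL : HasSum (fun i => π (i + 1) * (1 - abar 1)) ((1 - π 0) * (1 - abar 1)) :=
      hπ1HS.mul_right _
    have hR : HasSum (fun i => π 0 * bbar (i + 1) + Q (i + 1))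
        (π 0 * (α * d + β) + (1 - π 0) * (α * d - T 1 + β)) :=
      (hbHS.mul_left (π 0)).add (hQ1tot ▸ hQ1_sum.hasSum)
    have hfe : (fun i => π (i + 1) * (1 - abar 1))
        = fun i => π 0 * bbar (i + 1) + Q (i + 1) := funext h1
    rw [hfe] at hL
    exact hL.unique hR
  -- final algebra
  rw [habar1] at hEq
  rw [eq_div_iff hα.ne']
  nlinarith [hEq]
end

section
/- With a_i = ∑_{j≥i} α_j + β·𝟙{i≤2} and b_i = ∑_{j≥i} α_j + β·𝟙{i≤1}, where α_j = α e^{-βλΔ}(βλΔ)^j/j!, if (π_i) is a probability distribution satisfying π_i = (π₀ b_i + ∑_{j=1}^{i-1} π_j a_{i+1-j})/(1-a₁) for i ≥ 1, then π₀ = (1 - β(2 + αλΔ))/α, provided 1 > β(2 + αλΔ). -/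
open Filter Topology


private lemma helper_tail (g : ℕ → ℝ) (G : ℝ) (hg : HasSum g G) (i : ℕ) :
    HasSum (fun j => g (i + j)) (G - ∑ k ∈ Finset.range i, g k) := by
  have h1 : Summable (fun j => g (j + i)) := (summable_nat_add_iff i).mpr hg.summable
  have h2 := hg.summable.sum_add_tsum_nat_add i
  rw [hg.tsum_eq] at h2
  have h3 : HasSum (fun j => g (j + i)) (G - ∑ k ∈ Finset.range i, g k) := by
    have h4 := h1.hasSum
    rw [show (∑' j, g (j + i)) = G - ∑ k ∈ Finset.range i, g k from by linarith] at h4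
    exact h4
  simpa [add_comm] using h3

private lemma abel_tail (g : ℕ → ℝ) (G L : ℝ) (hgnn : ∀ k, 0 ≤ g k) (hg : HasSum g G)
    (hkg : HasSum (fun k : ℕ => (k : ℝ) * g k) L) :
    HasSum (fun i => ∑' j, g (i + 1 + j)) L := by
  set A : ℕ → ℝ := fun i => ∑' j, g (i + j) with hA
  have hAeq : ∀ i, A i = G - ∑ k ∈ Finset.range i, g k :=
    fun i => (helper_tail g G hg i).tsum_eq
  have hAhas : ∀ i, HasSum (fun j => g (i + j)) (A i) := by
    intro i; rw [hAeq]; exact helper_tail g G hg i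
  have hAnn : ∀ i, 0 ≤ A i := fun i => (hAhas i).nonneg (fun j => hgnn _)
  have hpart : ∀ N : ℕ, ∑ i ∈ Finset.range N, A (i + 1)
      = (∑ k ∈ Finset.range (N + 1), (k : ℝ) * g k) + N * A (N + 1) := by
    intro N
    induction N with
    | zero => simp
    | succ n ih =>
      have hstep : A (n + 1) = g (n + 1) + A (n + 2) := by
        rw [hAeq, hAeq, Finset.sum_range_succ (n := n + 1)]; ring
      rw [Finset.sum_range_succ, ih, Finset.sum_range_succ (f := fun k => (k : ℝ) * g k) (n := n + 1)]
      push_cast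
      rw [hstep]
      ring
  have hkgt : ∀ N, HasSum (fun j => ((N + j : ℕ) : ℝ) * g (N + j))
      (L - ∑ k ∈ Finset.range N, (k : ℝ) * g k) :=
    fun N => helper_tail (fun k : ℕ => (k : ℝ) * g k) L hkg N
  have hbound : ∀ N : ℕ, (N : ℝ) * A (N + 1) ≤ L - ∑ k ∈ Finset.range (N + 1), (k : ℝ) * g k := by
    intro N
    have h1 : HasSum (fun j => (N : ℝ) * g (N + 1 + j)) ((N : ℝ) * A (N + 1)) :=
      (hAhas (N + 1)).mul_left _
    refine hasSum_le (fun j => ?_) h1 (hkgt (N + 1))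
    have hle : (N : ℝ) ≤ ((N + 1 + j : ℕ) : ℝ) := by push_cast; linarith
    exact mul_le_mul_of_nonneg_right hle (hgnn _)
  have hLsum : Tendsto (fun N : ℕ => ∑ k ∈ Finset.range (N + 1), (k : ℝ) * g k) atTop (𝓝 L) :=
    hkg.tendsto_sum_nat.comp (tendsto_add_atTop_nat 1)
  have htail0 : Tendsto (fun N : ℕ => L - ∑ k ∈ Finset.range (N + 1), (k : ℝ) * g k)
      atTop (𝓝 0) := by
    have := tendsto_const_nhds (x := L) (f := atTop (α := ℕ)) |>.sub hLsum
    simpa using this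
  have hNA0 : Tendsto (fun N : ℕ => (N : ℝ) * A (N + 1)) atTop (𝓝 0) :=
    squeeze_zero (fun N => mul_nonneg (Nat.cast_nonneg N) (hAnn _)) hbound htail0
  have hfinal : Tendsto (fun N : ℕ => ∑ i ∈ Finset.range N, A (i + 1)) atTop (𝓝 L) := by
    have h := hLsum.add hNA0
    rw [add_zero] at h
    exact h.congr (fun N => (hpart N).symm)
  exact (hasSum_iff_tendsto_nat_of_nonneg (fun i => hAnn (i + 1)) L).mpr hfinal

private lemma double_sum (x y : ℕ → ℝ) (hx : ∀ i, 0 ≤ x i) (hy : ∀ i, 0 ≤ y i)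
    (hxs : Summable x) (hys : Summable fun k => y (k + 2))
    (hCs : Summable fun i => ∑ j ∈ Finset.Ico 1 (i + 1), x j * y (i + 1 + 1 - j)) :
    ∑' i, (∑ j ∈ Finset.Ico 1 (i + 1), x j * y (i + 1 + 1 - j))
      = (∑' j, x (j + 1)) * (∑' k, y (k + 2)) := by
  classical
  set F : ℕ → ℕ → ENNReal := fun i j =>
    if j ∈ Finset.Ico 1 (i + 1) then ENNReal.ofReal (x j * y (i + 1 + 1 - j)) else 0 with hF
  have hxnn : ∀ i, 0 ≤ ∑ j ∈ Finset.Ico 1 (i + 1), x j * y (i + 1 + 1 - j) :=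
    fun i => Finset.sum_nonneg fun j _ => mul_nonneg (hx _) (hy _)
  have step1 : ∀ i, ENNReal.ofReal (∑ j ∈ Finset.Ico 1 (i + 1), x j * y (i + 1 + 1 - j))
      = ∑' j, F i j := by
    intro i
    rw [ENNReal.ofReal_sum_of_nonneg (fun j _ => mul_nonneg (hx _) (hy _))]
    rw [tsum_eq_sum (s := Finset.Ico 1 (i + 1)) (fun j hj => if_neg hj)]
    exact Finset.sum_congr rfl fun j hj => (if_pos hj).symm
  have T : ENNReal := ∑' k, ENNReal.ofReal (y (k + 2))
  have step3 : ∀ m : ℕ, ∑' i, F i (m + 1)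
      = ENNReal.ofReal (x (m + 1)) * ∑' k, ENNReal.ofReal (y (k + 2)) := by
    intro m
    have hinj : Function.Injective (fun k : ℕ => k + (m + 1)) := add_left_injective _
    have hsupp : Function.support (fun i => F i (m + 1)) ⊆ Set.range (fun k : ℕ => k + (m + 1)) := by
      intro i hi
      rcases le_or_gt (m + 1) i with h | h
      · exact ⟨i - (m + 1), by simp; omega⟩
      · exfalso; apply hi; simp only [hF, if_neg]
        simp [Finset.mem_Ico]; omega
    have := hinj.tsum_eq (f := fun i => F i (m + 1)) hsupp
    rw [← this]
    have hval : ∀ k : ℕ, F (k + (m + 1)) (m + 1) = ENNReal.ofReal (x (m + 1)) * ENNReal.ofReal (y (k + 2)) := by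
      intro k
      have hmem : (m + 1) ∈ Finset.Ico 1 (k + (m + 1) + 1) := by simp [Finset.mem_Ico]
      simp only [hF, if_pos hmem]
      rw [show k + (m + 1) + 1 + 1 - (m + 1) = k + 2 from by omega,
        ENNReal.ofReal_mul (hx _)]
    simp only [hval]
    exact ENNReal.tsum_mul_left
  have step0 : ∑' i, F i 0 = 0 := by
    simp [hF, Finset.mem_Ico]
  have swap : ∑' i, ∑' j, F i j = ∑' j, ∑' i, F i j := ENNReal.tsum_comm
  have hsucc : ∑' j, ∑' i, F i j = ∑' m, ∑' i, F i (m + 1) := by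
    have hinj : Function.Injective Nat.succ := Nat.succ_injective
    have hsupp : Function.support (fun j => ∑' i, F i j) ⊆ Set.range Nat.succ := by
      intro j hj
      rcases j with _ | m
      · exact absurd step0 hj
      · exact ⟨m, rfl⟩
    exact (hinj.tsum_eq (f := fun j => ∑' i, F i j) hsupp).symm
  have key : ∑' i, ENNReal.ofReal (∑ j ∈ Finset.Ico 1 (i + 1), x j * y (i + 1 + 1 - j))
      = ENNReal.ofReal ((∑' j, x (j + 1)) * (∑' k, y (k + 2))) := by
    calc ∑' i, ENNReal.ofReal (∑ j ∈ Finset.Ico 1 (i + 1), x j * y (i + 1 + 1 - j))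
        = ∑' i, ∑' j, F i j := by simp only [step1]
      _ = ∑' m, ∑' i, F i (m + 1) := by rw [swap, hsucc]
      _ = ∑' m, ENNReal.ofReal (x (m + 1)) * ∑' k, ENNReal.ofReal (y (k + 2)) := by
          simp only [step3]
      _ = (∑' m, ENNReal.ofReal (x (m + 1))) * ∑' k, ENNReal.ofReal (y (k + 2)) :=
          ENNReal.tsum_mul_right
      _ = ENNReal.ofReal (∑' j, x (j + 1)) * ENNReal.ofReal (∑' k, y (k + 2)) := by
          rw [← ENNReal.ofReal_tsum_of_nonneg (fun m => hx _) ((summable_nat_add_iff 1).mpr hxs),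
            ← ENNReal.ofReal_tsum_of_nonneg (fun k => hy _) hys]
      _ = ENNReal.ofReal ((∑' j, x (j + 1)) * (∑' k, y (k + 2))) :=
          (ENNReal.ofReal_mul (tsum_nonneg fun j => hx _)).symm
  rw [← ENNReal.ofReal_tsum_of_nonneg hxnn hCs] at key
  exact (ENNReal.ofReal_eq_ofReal_iff (tsum_nonneg hxnn)
    (mul_nonneg (tsum_nonneg fun j => hx _) (tsum_nonneg fun k => hy _))).mp key



/-- Ramaswami recursion for the Δ-delay model: with `α_j = α e^{-βλΔ} (βλΔ)ʲ/j!`,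
`a_i = ∑_{j≥i} α_j + β 𝟙{i≤2}`, `b_i = ∑_{j≥i} α_j + β 𝟙{i≤1}`, if the probability
distribution `π` satisfies `π_i = (π₀ b_i + ∑_{j=1}^{i-1} π_j a_{i+1-j})/(1-a₁)` for
`i ≥ 1`, then `π₀ = (1 - β(2 + αλΔ))/α`, provided `1 > β(2 + αλΔ)`.  Here `d` is `λΔ`. -/
theorem ramaswami_pi0 (α β d : ℝ) (hα : 0 < α) (hβ : 0 < β) (hαβ : α + β = 1)
    (hd : 0 ≤ d) (hcond : β * (2 + α * d) < 1)
    (a b : ℕ → ℝ)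
    (ha : ∀ i, a i =
      (∑' j : ℕ, α * Real.exp (-(β * d)) * (β * d) ^ (i + j) / (Nat.factorial (i + j) : ℝ)) +
        (if i ≤ 2 then β else 0))
    (hb : ∀ i, b i =
      (∑' j : ℕ, α * Real.exp (-(β * d)) * (β * d) ^ (i + j) / (Nat.factorial (i + j) : ℝ)) +
        (if i ≤ 1 then β else 0))
    (π : ℕ → ℝ) (hnn : ∀ i, 0 ≤ π i) (htot : ∑' i : ℕ, π i = 1)
    (hrec : ∀ i : ℕ, 1 ≤ i →
      π i = (π 0 * b i + ∑ j ∈ Finset.Ico 1 i, π j * a (i + 1 - j)) / (1 - a 1)) :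
    π 0 = (1 - β * (2 + α * d)) / α := by
  classical
  have ht : 0 ≤ β * d := mul_nonneg hβ.le hd
  set g : ℕ → ℝ := fun k => α * Real.exp (-(β * d)) * (β * d) ^ k / (Nat.factorial k : ℝ)
    with hgdef
  have hgnn : ∀ k, 0 ≤ g k := fun k =>
    div_nonneg (mul_nonneg (mul_nonneg hα.le (Real.exp_pos _).le) (pow_nonneg ht _))
      (Nat.cast_nonneg _)
  -- exp series
  have he : HasSum (fun k : ℕ => (β * d) ^ k / (Nat.factorial k : ℝ)) (Real.exp (β * d)) := by
    have h1 := Real.summable_pow_div_factorial (β * d)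
    have h2 : Real.exp (β * d) = ∑' n : ℕ, (β * d) ^ n / (Nat.factorial n : ℝ) := by
      rw [Real.exp_eq_exp_ℝ]
      exact congrFun NormedSpace.exp_eq_tsum_div (β * d)
    exact h2 ▸ h1.hasSum
  have hgsum : HasSum g α := by
    have h1 := he.mul_left (α * Real.exp (-(β * d)))
    have h2 : α * Real.exp (-(β * d)) * Real.exp (β * d) = α := by
      rw [mul_assoc, ← Real.exp_add]; simp
    rw [h2] at h1
    exact h1.congr_fun fun k => mul_div_assoc _ _ _
  -- first moment
  have hkg : HasSum (fun k : ℕ => (k : ℝ) * g k) (α * (β * d)) := by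
    have h1 : HasSum (fun k => (β * d) * g k) ((β * d) * α) := hgsum.mul_left _
    have h2 : ∀ k : ℕ, ((k + 1 : ℕ) : ℝ) * g (k + 1) = (β * d) * g k := by
      intro k
      have hf : ((Nat.factorial (k + 1) : ℕ) : ℝ) = ((k : ℝ) + 1) * (Nat.factorial k : ℝ) := by
        rw [Nat.factorial_succ]; push_cast; ring
      have hfk : (Nat.factorial k : ℝ) ≠ 0 := Nat.cast_ne_zero.mpr (Nat.factorial_ne_zero k)
      simp only [hgdef]
      rw [hf]
      push_cast
      field_simp
      ring
    have h3 : HasSum (fun k : ℕ => ((k + 1 : ℕ) : ℝ) * g (k + 1)) ((β * d) * α) :=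
      h1.congr_fun fun k => h2 k
    have h4 := (hasSum_nat_add_iff (f := fun k : ℕ => (k : ℝ) * g k) 1).mp h3
    simp only [Finset.range_one, Finset.sum_singleton, Nat.cast_zero, zero_mul, add_zero] at h4
    rw [show α * (β * d) = β * d * α from by ring]
    exact h4
  -- tails
  have hAt : ∀ i, HasSum (fun j => g (i + j)) (α - ∑ k ∈ Finset.range i, g k) :=
    fun i => helper_tail g α hgsum i
  have hg0 : g 0 = α * Real.exp (-(β * d)) := by simp [hgdef]
  have hc : 0 < α * Real.exp (-(β * d)) := mul_pos hα (Real.exp_pos _)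
  -- rewrite a and b
  have ha' : ∀ i, a i = (α - ∑ k ∈ Finset.range i, g k) + (if i ≤ 2 then β else 0) := by
    intro i
    rw [ha i, ← (hAt i).tsum_eq]
  have hb' : ∀ i, b i = (α - ∑ k ∈ Finset.range i, g k) + (if i ≤ 1 then β else 0) := by
    intro i
    rw [hb i, ← (hAt i).tsum_eq]
  have hAnn : ∀ i, 0 ≤ α - ∑ k ∈ Finset.range i, g k := fun i => (hAt i).nonneg fun j => hgnn _
  have hann : ∀ i, 0 ≤ a i := by
    intro i; rw [ha' i]
    have : (0:ℝ) ≤ (if i ≤ 2 then β else 0) := by split <;> simp [hβ.le]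
    linarith [hAnn i]
  have h1a : 1 - a 1 = α * Real.exp (-(β * d)) := by
    rw [ha' 1, Finset.sum_range_one, hg0]
    norm_num
    linarith
  -- sum of b (i+1)
  have habel : HasSum (fun i => α - ∑ k ∈ Finset.range (i + 1), g k) (α * (β * d)) := by
    have h := abel_tail g α (α * (β * d)) hgnn hgsum hkg
    exact h.congr_fun fun i => ((hAt (i + 1)).tsum_eq).symm
  have hind1 : HasSum (fun i : ℕ => if i + 1 ≤ 1 then β else (0:ℝ)) β := by
    have h := hasSum_ite_eq (0 : ℕ) β
    exact h.congr_fun fun i => by rcases i with _ | i <;> simp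
  have hbs : HasSum (fun i => b (i + 1)) (α * (β * d) + β) := by
    have h := habel.add hind1
    exact h.congr_fun fun i => hb' (i + 1)
  -- sum of a (k+2)
  have hA2 : HasSum (fun k : ℕ => α - ∑ j ∈ Finset.range (k + 2), g j)
      (α * (β * d) - (α - g 0)) := by
    have h := (hasSum_nat_add_iff (f := fun i => α - ∑ k ∈ Finset.range (i + 1), g k) 1).mpr
      (show HasSum (fun i => α - ∑ k ∈ Finset.range (i + 1), g k)
        ((α * (β * d) - (α - g 0)) + ∑ i ∈ Finset.range 1, (α - ∑ k ∈ Finset.range (i + 1), g k))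
        from by
          have h0 : (∑ i ∈ Finset.range 1, (α - ∑ k ∈ Finset.range (i + 1), g k)) = α - g 0 := by
            simp
          rw [h0, show α * (β * d) - (α - g 0) + (α - g 0) = α * (β * d) from by ring]
          exact habel)
    exact h
  have hind2 : HasSum (fun k : ℕ => if k + 2 ≤ 2 then β else (0:ℝ)) β := by
    have h := hasSum_ite_eq (0 : ℕ) β
    exact h.congr_fun fun k => by rcases k with _ | k <;> simp
  have has2 : HasSum (fun k => a (k + 2)) ((α * (β * d) - (α - g 0)) + β) := by
    have h := hA2.add hind2
    exact h.congr_fun fun k => ha' (k + 2)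
  -- pi facts
  have hπs : Summable π := by
    by_contra h
    rw [tsum_eq_zero_of_not_summable h] at htot
    norm_num at htot
  have hH : HasSum π 1 := htot ▸ hπs.hasSum
  have hπtail : HasSum (fun i => π (i + 1)) (1 - π 0) := by
    have h := (hasSum_nat_add_iff (f := π) 1).mpr
      (show HasSum π ((1 - π 0) + ∑ i ∈ Finset.range 1, π i) from by
        simp only [Finset.range_one, Finset.sum_singleton]
        rw [show 1 - π 0 + π 0 = 1 from by ring]
        exact hH)
    exact h
  -- recursion rearranged
  have hrec' : ∀ i : ℕ, π (i + 1) * (α * Real.exp (-(β * d)))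
      = π 0 * b (i + 1) + ∑ j ∈ Finset.Ico 1 (i + 1), π j * a (i + 1 + 1 - j) := by
    intro i
    have h := hrec (i + 1) (Nat.le_add_left 1 i)
    rw [h1a] at h
    exact (eq_div_iff hc.ne').mp h
  have hCs : Summable (fun i => ∑ j ∈ Finset.Ico 1 (i + 1), π j * a (i + 1 + 1 - j)) := by
    have h1 : Summable (fun i => π (i + 1) * (α * Real.exp (-(β * d))) - π 0 * b (i + 1)) :=
      (hπtail.summable.mul_right _).sub (hbs.summable.mul_left _)
    exact h1.congr fun i => by rw [hrec' i]; ring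
  have hCval : HasSum (fun i => ∑ j ∈ Finset.Ico 1 (i + 1), π j * a (i + 1 + 1 - j))
      ((1 - π 0) * (α * Real.exp (-(β * d))) - π 0 * (α * (β * d) + β)) := by
    have h1 := (hπtail.mul_right (α * Real.exp (-(β * d)))).sub (hbs.mul_left (π 0))
    exact h1.congr_fun fun i => by rw [hrec' i]; ring
  have hdouble := double_sum π a hnn hann hπs has2.summable hCs
  rw [hCval.tsum_eq, hπtail.tsum_eq, has2.tsum_eq] at hdouble
  -- final algebra
  rw [eq_div_iff hα.ne']
  linear_combination -hdouble + hαβ - (1 - π 0) * hg0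
end

section
/- If S̄ is the sum of k i.i.d. random variables with PGF ᾱ₀ e^{zλΔ}/(1-zβ) where ᾱ₀ = α e^{-λΔ}, then P(S̄ = s) = ᾱ₀^k ∑_{n=0}^{s} C(k-1+n, n) β^n (λΔ k)^{s-n}/(s-n)!. -/
open MeasureTheory ProbabilityTheory Real

/-! ### Auxiliary convolution framework -/

noncomputable def cvAux (f g : ℕ → ℝ) (s : ℕ) : ℝ := ∑ a ∈ Finset.range (s+1), f a * g (s-a)

lemma cvAux_eq (f g : ℕ → ℝ) (s : ℕ) :
    cvAux f g s = PowerSeries.coeff s (PowerSeries.mk f * PowerSeries.mk g) := by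
  rw [PowerSeries.coeff_mul, Finset.Nat.sum_antidiagonal_eq_sum_range_succ_mk]
  simp [cvAux]

lemma mk_cvAux (f g : ℕ → ℝ) :
    PowerSeries.mk (cvAux f g) = PowerSeries.mk f * PowerSeries.mk g := by
  ext n; simp [cvAux_eq]

lemma cvAux_merge (A B A' B' : ℕ → ℝ) (s : ℕ) :
    cvAux (cvAux A B) (cvAux A' B') s = cvAux (cvAux A A') (cvAux B B') s := by
  simp only [cvAux_eq, mk_cvAux]
  congr 1
  ring

lemma cvAux_nonneg {f g : ℕ → ℝ} (hf : ∀ n, 0 ≤ f n) (hg : ∀ n, 0 ≤ g n) (s : ℕ) :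
    0 ≤ cvAux f g s :=
  Finset.sum_nonneg fun a _ => mul_nonneg (hf a) (hg _)

/-! ### Combinatorial identities -/

lemma chooseSumAux (t n : ℕ) :
    ∑ a ∈ Finset.range (n+1), Nat.choose (t+a) a = Nat.choose (t+1+n) n := by
  have h1 : ∀ a, Nat.choose (t+a) a = Nat.choose (t+a) t := by
    intro a
    rw [← Nat.choose_symm (Nat.le_add_right t a), Nat.add_sub_cancel_left]
  simp only [h1]
  have h2 : ∑ a ∈ Finset.range (n+1), Nat.choose (t+a) t
      = ∑ m ∈ Finset.Icc t (t+n), Nat.choose m t := by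
    rw [← Finset.Ico_add_one_right_eq_Icc, Finset.sum_Ico_eq_sum_range]
    have : t + n + 1 - t = n + 1 := by omega
    rw [this]
  rw [h2, Nat.sum_Icc_choose]
  rw [← Nat.choose_symm (by omega : n ≤ t+1+n)]
  congr 1 <;> omega

lemma geomAux (β : ℝ) (t n : ℕ) :
    cvAux (fun i => (Nat.choose (t+i) i : ℝ) * β^i) (fun i => β^i) n
      = (Nat.choose (t+1+n) n : ℝ) * β^n := by
  unfold cvAux
  rw [← chooseSumAux t n]
  push_cast
  rw [Finset.sum_mul]
  refine Finset.sum_congr rfl fun a ha => ?_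
  rw [Finset.mem_range] at ha
  rw [mul_assoc, ← pow_add]
  congr 2
  omega

lemma poissonAux (x y : ℝ) (n : ℕ) :
    cvAux (fun i => x^i / (Nat.factorial i : ℝ)) (fun i => y^i / (Nat.factorial i : ℝ)) n
      = (x+y)^n / (Nat.factorial n : ℝ) := by
  unfold cvAux
  rw [add_pow, Finset.sum_div]
  refine Finset.sum_congr rfl fun a ha => ?_
  rw [Finset.mem_range] at ha
  have ha' : a ≤ n := by omega
  have hfac : (Nat.choose n a : ℝ) * (Nat.factorial a : ℝ) * (Nat.factorial (n-a) : ℝ)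
      = (Nat.factorial n : ℝ) := by
    exact_mod_cast congrArg (Nat.cast : ℕ → ℝ) (Nat.choose_mul_factorial_mul_factorial ha')
  have h1 : (Nat.factorial a : ℝ) ≠ 0 := Nat.cast_ne_zero.2 (Nat.factorial_ne_zero a)
  have h2 : (Nat.factorial (n-a) : ℝ) ≠ 0 := Nat.cast_ne_zero.2 (Nat.factorial_ne_zero _)
  have h3 : (Nat.factorial n : ℝ) ≠ 0 := Nat.cast_ne_zero.2 (Nat.factorial_ne_zero n)
  field_simp
  rw [← hfac]
  ring

/-! ### The family of target PMFs -/

noncomputable def PfAux (α β d : ℝ) (t s : ℕ) : ℝ :=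
  (α * Real.exp (-d))^(t+1) *
    cvAux (fun n => (Nat.choose (t+n) n : ℝ) * β^n)
       (fun m => (d * ((t:ℝ)+1))^m / (Nat.factorial m : ℝ)) s

lemma PfAux_nonneg {α β d : ℝ} (hα : 0 ≤ α) (hβ : 0 ≤ β) (hd : 0 ≤ d) (t s : ℕ) :
    0 ≤ PfAux α β d t s := by
  refine mul_nonneg (pow_nonneg (mul_nonneg hα (Real.exp_nonneg _)) _) (cvAux_nonneg ?_ ?_ s)
  · intro n; positivity
  · intro m
    have : 0 ≤ d * ((t:ℝ)+1) := by positivity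
    positivity

lemma convPAux (α β d : ℝ) (t s : ℕ) :
    ∑ a ∈ Finset.range (s+1), PfAux α β d t a * PfAux α β d 0 (s-a) = PfAux α β d (t+1) s := by
  have hA0 : (fun i => (Nat.choose (0+i) i : ℝ) * β^i) = fun i => β^i := by
    funext i; simp
  have hAfun : cvAux (fun n => (Nat.choose (t+n) n : ℝ) * β^n)
        (fun n => (Nat.choose (0+n) n : ℝ) * β^n)
      = fun n => (Nat.choose (t+1+n) n : ℝ) * β^n := by
    funext n; rw [hA0]; exact geomAux β t n
  have hBfun : cvAux (fun m => (d * ((t:ℝ)+1))^m / (Nat.factorial m : ℝ))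
        (fun m => (d * ((0:ℝ)+1))^m / (Nat.factorial m : ℝ))
      = fun m => (d * (((t+1 : ℕ) : ℝ)+1))^m / (Nat.factorial m : ℝ) := by
    funext m; rw [poissonAux]; congr 2; push_cast; ring
  have hstep : ∑ a ∈ Finset.range (s+1), PfAux α β d t a * PfAux α β d 0 (s-a)
      = (α * Real.exp (-d))^(t+2) *
        cvAux (cvAux (fun n => (Nat.choose (t+n) n : ℝ) * β^n)
               (fun m => (d * ((t:ℝ)+1))^m / (Nat.factorial m : ℝ)))
           (cvAux (fun n => (Nat.choose (0+n) n : ℝ) * β^n)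
               (fun m => (d * ((0:ℝ)+1))^m / (Nat.factorial m : ℝ))) s := by
    rw [show ∀ (f g : ℕ → ℝ), cvAux f g s = ∑ a ∈ Finset.range (s+1), f a * g (s-a)
      from fun _ _ => rfl, Finset.mul_sum]
    refine Finset.sum_congr rfl fun a _ => ?_
    unfold PfAux
    push_cast
    ring
  rw [hstep, cvAux_merge, hAfun, hBfun]
  unfold PfAux
  norm_num

lemma basePmfAux (α β d : ℝ) (hβ0 : 0 < β) (c : ℕ) :
    α * β ^ c * Real.exp (-d) *
        ∑ j ∈ Finset.range (c + 1), (d / β) ^ j / (Nat.factorial j : ℝ)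
      = (α * Real.exp (-d)) *
          cvAux (fun n => β^n) (fun m => d^m / (Nat.factorial m : ℝ)) c := by
  unfold cvAux
  rw [Finset.mul_sum, Finset.mul_sum]
  rw [← Finset.sum_range_reflect]
  refine Finset.sum_congr rfl fun j hj => ?_
  rw [Finset.mem_range] at hj
  have hj' : j ≤ c := by omega
  have h1 : c + 1 - 1 - j = c - j := by omega
  rw [h1]
  have hb : β ≠ 0 := ne_of_gt hβ0
  have : β ^ c = β ^ j * β ^ (c - j) := by rw [← pow_add]; congr 1; omega
  rw [this, div_pow]
  field_simp

lemma PfAux_zero (α β d : ℝ) (c : ℕ) :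
    PfAux α β d 0 c = (α * Real.exp (-d)) *
      cvAux (fun n => β^n) (fun m => d^m / (Nat.factorial m : ℝ)) c := by
  unfold PfAux
  simp

/-! ### Probabilistic lemmas -/

lemma iIndepFun_precompAux {Ω : Type*} [MeasurableSpace Ω] {μ : Measure Ω}
    {ι ι' : Type*} {f : ι → Ω → ℕ} (g : ι' ↪ ι)
    (h : iIndepFun f μ) :
    iIndepFun (fun i => f (g i)) μ := by
  classical
  rw [iIndepFun_iff_measure_inter_preimage_eq_mul] at h ⊢
  intro S sets hsets
  have hinj : Function.Injective g := g.injective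
  set sets' : ι → Set ℕ := Function.extend g sets (fun _ => Set.univ) with hsets'
  have key := h (S.map g) (sets := sets') (fun i _ => trivial)
  have h1 : (⋂ i ∈ S.map g, f i ⁻¹' sets' i) = ⋂ i ∈ S, f (g i) ⁻¹' sets (i) := by
    ext ω
    simp only [Set.mem_iInter, Finset.mem_map]
    constructor
    · intro hh i hi
      have := hh (g i) ⟨i, hi, rfl⟩
      rwa [hsets', hinj.extend_apply] at this
    · rintro hh i ⟨j, hj, rfl⟩
      rw [hsets', hinj.extend_apply]
      exact hh j hj
  have h2 : (∏ i ∈ S.map g, μ (f i ⁻¹' sets' i)) = ∏ i ∈ S, μ (f (g i) ⁻¹' sets i) := by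
    rw [Finset.prod_map]
    refine Finset.prod_congr rfl fun i _ => ?_
    simp only [Function.Embedding.toFun_eq_coe, hsets', hinj.extend_apply]
  rw [h1, h2] at key
  exact key

lemma mainAux (α β d : ℝ) (hα0 : 0 ≤ α) (hβ0 : 0 ≤ β) (hd : 0 ≤ d) :
    ∀ (t : ℕ) {Ω : Type*} [MeasurableSpace Ω] (μ : Measure Ω) [IsProbabilityMeasure μ]
      (C : Fin (t+1) → Ω → ℕ), (∀ i, Measurable (C i)) →
      iIndepFun C μ →
      (∀ i c, μ {ω | C i ω = c} = ENNReal.ofReal (PfAux α β d 0 c)) →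
      ∀ s, μ {ω | ∑ i, C i ω = s} = ENNReal.ofReal (PfAux α β d t s) := by
  intro t
  induction t with
  | zero =>
    intro Ω _ μ _ C hmeas hindep hlaw s
    have : {ω | ∑ i, C i ω = s} = {ω | C 0 ω = s} := by
      ext ω; simp [Fin.sum_univ_one]
    rw [this, hlaw 0 s]
  | succ t ih =>
    intro Ω _ μ _ C hmeas hindep hlaw s
    classical
    set C' : Fin (t+1) → Ω → ℕ := fun i => C i.castSucc with hC'
    have hmeas' : ∀ i, Measurable (C' i) := fun i => hmeas _
    have hindep' : iIndepFun C' μ :=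
      iIndepFun_precompAux Fin.castSuccEmb hindep
    have hlaw' : ∀ i c, μ {ω | C' i ω = c} = ENNReal.ofReal (PfAux α β d 0 c) :=
      fun i c => hlaw _ c
    set X : Ω → ℕ := fun ω => ∑ i, C' i ω with hX
    set Y : Ω → ℕ := C (Fin.last (t+1)) with hY
    have hXmeas : Measurable X := Finset.measurable_sum _ fun i _ => hmeas' i
    have hYmeas : Measurable Y := hmeas _
    have hXY : IndepFun X Y μ := by
      have hnot : Fin.last (t+1) ∉ (Finset.univ.map Fin.castSuccEmb) := by
        simp only [Finset.mem_map, Finset.mem_univ, true_and, not_exists]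
        intro i
        exact (Fin.castSucc_lt_last i).ne
      have h0 := iIndepFun.indepFun_finsetSum_of_notMem hindep hmeas hnot
      have heq : (∑ j ∈ Finset.univ.map Fin.castSuccEmb, C j) = X := by
        funext ω
        rw [Finset.sum_map, Finset.sum_apply]
        rfl
      rwa [heq] at h0
    have hset : {ω | ∑ i, C i ω = s}
        = ⋃ a ∈ Finset.range (s+1), ({ω | X ω = a} ∩ {ω | Y ω = s - a}) := by
      ext ω
      simp only [Set.mem_setOf_eq, Set.mem_iUnion, Finset.mem_range, Set.mem_inter_iff,
        exists_prop]
      rw [Fin.sum_univ_castSucc]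
      have hx : (∑ i : Fin (t+1), C i.castSucc ω) = X ω := rfl
      have hy : C (Fin.last (t+1)) ω = Y ω := rfl
      rw [hx, hy]
      constructor
      · intro h
        refine ⟨X ω, by omega, rfl, by omega⟩
      · rintro ⟨a, ha, h1, h2⟩
        omega
    rw [hset]
    rw [measure_biUnion_finset ?disj ?meas]
    case disj =>
      intro a _ b _ hab
      refine Set.disjoint_left.2 fun ω h1 h2 => hab ?_
      rw [← h1.1, ← h2.1]
    case meas =>
      intro b _
      exact (hXmeas (measurableSet_singleton b)).inter (hYmeas (measurableSet_singleton _))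
    have hterm : ∀ a, μ ({ω | X ω = a} ∩ {ω | Y ω = s - a})
        = ENNReal.ofReal (PfAux α β d t a * PfAux α β d 0 (s-a)) := by
      intro a
      have h1 := hXY.measure_inter_preimage_eq_mul {a} {s-a}
        (measurableSet_singleton _) (measurableSet_singleton _)
      have e1 : X ⁻¹' {a} = {ω | X ω = a} := rfl
      have e2 : Y ⁻¹' {s-a} = {ω | Y ω = s - a} := rfl
      rw [e1, e2] at h1
      rw [h1, ih μ C' hmeas' hindep' hlaw' a, hlaw _ (s-a),
        ← ENNReal.ofReal_mul (PfAux_nonneg hα0 hβ0 hd t a)]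
    calc ∑ a ∈ Finset.range (s+1), μ ({ω | X ω = a} ∩ {ω | Y ω = s - a})
        = ∑ a ∈ Finset.range (s+1),
            ENNReal.ofReal (PfAux α β d t a * PfAux α β d 0 (s-a)) := by
          exact Finset.sum_congr rfl fun a _ => hterm a
      _ = ENNReal.ofReal (∑ a ∈ Finset.range (s+1),
            PfAux α β d t a * PfAux α β d 0 (s-a)) := by
          rw [ENNReal.ofReal_sum_of_nonneg]
          intro a _
          exact mul_nonneg (PfAux_nonneg hα0 hβ0 hd t a) (PfAux_nonneg hα0 hβ0 hd 0 _)
      _ = ENNReal.ofReal (PfAux α β d (t+1) s) := by rw [convPAux]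

/-- If `S̄` is the sum of `k` i.i.d. copies of `C̄`, where `C̄` has PMF
`P_C̄(c) = α βᶜ e^{-λΔ} ∑_{j=0}^{c} (λΔ/β)ʲ/j!` (so its PGF is `ᾱ₀ e^{zλΔ}/(1-zβ)` with
`ᾱ₀ = α e^{-λΔ}`), then
`P(S̄ = s) = ᾱ₀^k ∑_{n=0}^{s} C(k-1+n,n) βⁿ (λΔ k)^{s-n}/(s-n)!`.  Here `d` is `λΔ`. -/
theorem sum_iid_pmf_rigged {Ω : Type*} [MeasurableSpace Ω] (μ : Measure Ω)
    [IsProbabilityMeasure μ]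
    (α β d : ℝ) (hα0 : 0 < α) (hα1 : α < 1) (hβ0 : 0 < β) (hβ1 : β < 1)
    (hαβ : α + β = 1) (hd : 0 ≤ d) (k : ℕ) (hk : 1 ≤ k)
    (C : Fin k → Ω → ℕ) (hmeas : ∀ i, Measurable (C i))
    (hindep : iIndepFun C μ)
    (hlaw : ∀ i c, μ {ω | C i ω = c} =
      ENNReal.ofReal (α * β ^ c * Real.exp (-d) *
        ∑ j ∈ Finset.range (c + 1), (d / β) ^ j / (Nat.factorial j : ℝ)))
    (s : ℕ) :
    μ {ω | ∑ i, C i ω = s} =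
      ENNReal.ofReal ((α * Real.exp (-d)) ^ k *
        ∑ n ∈ Finset.range (s + 1),
          (Nat.choose (k - 1 + n) n : ℝ) * β ^ n * (d * k) ^ (s - n) /
            (Nat.factorial (s - n) : ℝ)) := by
  obtain ⟨t, rfl⟩ : ∃ t, k = t + 1 := ⟨k - 1, by omega⟩
  have hlaw' : ∀ i c, μ {ω | C i ω = c} = ENNReal.ofReal (PfAux α β d 0 c) := by
    intro i c
    rw [hlaw i c, basePmfAux α β d hβ0 c, PfAux_zero]
  rw [mainAux α β d hα0.le hβ0.le hd t μ C hmeas hindep hlaw' s]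
  congr 1
  unfold PfAux cvAux
  congr 1
  refine Finset.sum_congr rfl fun n hn => ?_
  simp only [Nat.add_sub_cancel]
  push_cast
  ring
end

section
/- The maximum of the lazy random walk T'_i = 𝟙{W_i=0} + ∑_{j=1}^i W_j (steps -1,0,+1 with probabilities α₀,α₁,β₁, β₁<α₀) capped below at 0, i.e., max(0, max_{i≥1} T'_i), has the same distribution as the stationary distribution of the chain P': P(max = 0) = (α₀-β₁)/(1-β₁) and P(max = a) = ((α₀-β₁)/(1-β₁))·((1-α₀)/α₀)·(β₁/α₀)^{a-1} for a ≥ 1. -/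
open MeasureTheory ProbabilityTheory

open Filter Finset

section setup
variable {Ω : Type*} [MeasurableSpace Ω] (μ : Measure Ω) [IsProbabilityMeasure μ]

/-- value function on steps -/
noncomputable def pval (α₀ α₁ β₁ : ℝ) : ℤ → ℝ := fun v =>
  if v = -1 then α₀ else if v = 0 then α₁ else if v = 1 then β₁ else 0

/-- lazy walk functional on sequences -/
def Tseq (x : ℕ → ℤ) (i : ℕ) : ℤ :=
  (if x (i - 1) = 0 then 1 else 0) + ∑ j ∈ Finset.range i, x j

/-- the event that the walk functional reaches `a` -/
def Eseq (a : ℕ) : Set (ℕ → ℤ) := {x | ∃ i, 1 ≤ i ∧ (a : ℤ) ≤ Tseq x i}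

def shiftseq (x : ℕ → ℤ) : ℕ → ℤ := fun i => x (i + 1)

lemma Tseq_one (x : ℕ → ℤ) : Tseq x 1 = (if x 0 = 0 then 1 else 0) + x 0 := by
  simp [Tseq]

lemma Tseq_succ (x : ℕ → ℤ) (k : ℕ) :
    Tseq x (k + 2) = x 0 + Tseq (shiftseq x) (k + 1) := by
  simp only [Tseq, shiftseq]
  rw [Finset.sum_range_succ']
  simp only [show k + 2 - 1 = k + 1 from rfl, show k + 1 - 1 + 1 = k + 1 from rfl]
  ring

lemma Eseq_anti : ∀ {a b : ℕ}, a ≤ b → Eseq b ⊆ Eseq a := by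
  intro a b hab x ⟨i, hi, hT⟩
  exact ⟨i, hi, le_trans (by exact_mod_cast hab) hT⟩

lemma measurable_Tseq (i : ℕ) : Measurable (fun x => Tseq x i) := by
  apply Measurable.add
  · exact (Measurable.of_discrete (f := fun v : ℤ => if v = 0 then (1:ℤ) else 0)).comp
      (measurable_pi_apply (i - 1))
  · exact Finset.measurable_sum _ (fun j _ => measurable_pi_apply j)

lemma measurable_Eseq (a : ℕ) : MeasurableSet (Eseq a) := by
  have : Eseq a = ⋃ i, {x : ℕ → ℤ | 1 ≤ i ∧ (a : ℤ) ≤ Tseq x i} := by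
    ext x; simp [Eseq]
  rw [this]
  refine MeasurableSet.iUnion fun i => ?_
  by_cases hi : 1 ≤ i
  · have : {x : ℕ → ℤ | 1 ≤ i ∧ (a : ℤ) ≤ Tseq x i} = (fun x => Tseq x i) ⁻¹' (Set.Ici (a:ℤ)) := by
      ext x; simp [hi]
    rw [this]; exact measurable_Tseq i measurableSet_Ici
  · have : {x : ℕ → ℤ | 1 ≤ i ∧ (a : ℤ) ≤ Tseq x i} = ∅ := by
      ext x; simp [hi]
    simp [this]

-- event identities
lemma Eseq_step_one (a : ℕ) (ha : 1 ≤ a) (x : ℕ → ℤ) (hx : x 0 = 1) :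
    x ∈ Eseq (a + 1) ↔ shiftseq x ∈ Eseq a := by
  constructor
  · rintro ⟨i, hi, hT⟩
    match i, hi with
    | 1, _ =>
      rw [Tseq_one, hx] at hT
      exfalso; simp at hT; omega
    | (k+2), _ =>
      rw [Tseq_succ, hx] at hT
      exact ⟨k + 1, by omega, by push_cast at hT ⊢; omega⟩
  · rintro ⟨i, hi, hT⟩
    obtain ⟨k, rfl⟩ : ∃ k, i = k + 1 := ⟨i - 1, by omega⟩
    refine ⟨k + 2, by omega, ?_⟩
    rw [Tseq_succ, hx]
    push_cast at hT ⊢; omega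

lemma Eseq_step_zero (a : ℕ) (ha : 1 ≤ a) (x : ℕ → ℤ) (hx : x 0 = 0) :
    x ∈ Eseq (a + 1) ↔ shiftseq x ∈ Eseq (a + 1) := by
  constructor
  · rintro ⟨i, hi, hT⟩
    match i, hi with
    | 1, _ =>
      rw [Tseq_one, hx] at hT
      exfalso; simp at hT; omega
    | (k+2), _ =>
      rw [Tseq_succ, hx] at hT
      exact ⟨k + 1, by omega, by push_cast at hT ⊢; omega⟩
  · rintro ⟨i, hi, hT⟩
    obtain ⟨k, rfl⟩ : ∃ k, i = k + 1 := ⟨i - 1, by omega⟩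
    refine ⟨k + 2, by omega, ?_⟩
    rw [Tseq_succ, hx]
    push_cast at hT ⊢; omega

lemma Eseq_step_neg (a : ℕ) (ha : 1 ≤ a) (x : ℕ → ℤ) (hx : x 0 = -1) :
    x ∈ Eseq a ↔ shiftseq x ∈ Eseq (a + 1) := by
  constructor
  · rintro ⟨i, hi, hT⟩
    match i, hi with
    | 1, _ =>
      rw [Tseq_one, hx] at hT
      exfalso; simp at hT; omega
    | (k+2), _ =>
      rw [Tseq_succ, hx] at hT
      exact ⟨k + 1, by omega, by push_cast at hT ⊢; omega⟩
  · rintro ⟨i, hi, hT⟩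
    obtain ⟨k, rfl⟩ : ∃ k, i = k + 1 := ⟨i - 1, by omega⟩
    refine ⟨k + 2, by omega, ?_⟩
    rw [Tseq_succ, hx]
    push_cast at hT ⊢; omega

lemma Eseq_base_one (x : ℕ → ℤ) (hx : x 0 = 1) : x ∈ Eseq 1 :=
  ⟨1, le_refl _, by rw [Tseq_one, hx]; simp⟩

lemma Eseq_base_zero (x : ℕ → ℤ) (hx : x 0 = 0) : x ∈ Eseq 1 :=
  ⟨1, le_refl _, by rw [Tseq_one, hx]; simp⟩

end setup


lemma solve_rec (α₀ α₁ β₁ : ℝ) (hα₀ : 0 < α₀) (hα₁ : 0 ≤ α₁) (hβ₁ : 0 < β₁)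
    (hsum : α₀ + α₁ + β₁ = 1) (hlt : β₁ < α₀) (x : ℕ → ℝ)
    (h0 : x 0 = (1 - α₀) + α₀ * x 1)
    (hrec : ∀ n, x (n+1) = β₁ * x n + α₁ * x (n+1) + α₀ * x (n+2))
    (hlim : Filter.Tendsto x Filter.atTop (nhds 0)) :
    ∀ n, x n = (β₁ / α₀) ^ n * ((1 - α₀) / (1 - β₁)) := by
  set q : ℝ := β₁ / α₀ with hqdef
  have hq0 : 0 < q := div_pos hβ₁ hα₀
  have hq1 : q < 1 := (div_lt_one hα₀).2 hlt
  have hβne : (1:ℝ) - β₁ > 0 := by nlinarith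
  have hQ : (1:ℝ) - q ≠ 0 := by nlinarith
  have hd : ∀ n, x (n+1) - x n = q ^ n * (x 1 - x 0) := by
    intro n
    induction n with
    | zero => simp
    | succ n ih =>
      have h := hrec n
      have h2 : x (n+2) - x (n+1) = q * (x (n+1) - x n) := by
        rw [hqdef]
        rw [div_mul_eq_mul_div, eq_div_iff (ne_of_gt hα₀)]
        linear_combination (-1 : ℝ) * h - x (n+1) * hsum
      rw [h2, ih]; ring
  have htrans : ∀ (A y : ℝ), (x 0 + A / (1 - q) = y) ↔ (A = (y - x 0) * (1 - q)) := by
    intro A y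
    rw [← div_eq_iff hQ, eq_sub_iff_add_eq']
  have hx : ∀ n, x n = x 0 + (x 1 - x 0) * ((1 - q ^ n) / (1 - q)) := by
    intro n
    induction n with
    | zero => simp
    | succ n ih =>
      have h3 := hd n
      rw [eq_comm, ← mul_div_assoc, htrans] at ih ⊢
      linear_combination ih - (1 - q) * h3
  have hqlim : Tendsto (fun n => q ^ n) atTop (nhds 0) :=
    tendsto_pow_atTop_nhds_zero_of_lt_one hq0.le hq1
  have hlim2 : Tendsto x atTop (nhds (x 0 + (x 1 - x 0) * ((1 - 0) / (1 - q)))) := by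
    have h4 : Tendsto (fun n => x 0 + (x 1 - x 0) * ((1 - q ^ n) / (1 - q))) atTop
        (nhds (x 0 + (x 1 - x 0) * ((1 - 0) / (1 - q)))) := by
      apply Tendsto.const_add
      apply Tendsto.const_mul
      exact (Tendsto.div_const (tendsto_const_nhds.sub hqlim) _)
    convert h4 using 1
    funext n; exact hx n
  have hkey : x 0 + (x 1 - x 0) * ((1 - 0) / (1 - q)) = 0 := tendsto_nhds_unique hlim2 hlim
  have hkey2 : x 1 - x 0 = -(x 0 * (1 - q)) := by
    rw [← mul_div_assoc, htrans] at hkey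
    linear_combination hkey
  have hx0 : x 0 = (1 - α₀) / (1 - β₁) := by
    rw [eq_div_iff (ne_of_gt hβne)]
    have hq2 : x 1 - x 0 = -(x 0 * (1 - β₁/α₀)) := hkey2
    have hq3 : α₀ * (x 1 - x 0) = -(x 0 * (α₀ - β₁)) := by
      rw [hq2]; field_simp
    linear_combination h0 + hq3
  intro n
  rw [hx n, hkey2, hx0]
  field_simp
  ring



/-- The maximum of the lazy random walk `T'_i = 𝟙{W_i=0} + ∑_{j=1}^i W_j`, capped below
at 0, has the stationary distribution of the chain `P'`:
`P(max = 0) = (α₀-β₁)/(1-β₁)` and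
`P(max = a) = ((α₀-β₁)/(1-β₁)) ((1-α₀)/α₀) (β₁/α₀)^{a-1}` for `a ≥ 1`. -/
theorem lazy_rw_max_stationary {Ω : Type*} [MeasurableSpace Ω] (μ : Measure Ω)
    [IsProbabilityMeasure μ]
    (α₀ α₁ β₁ : ℝ) (hα₀ : 0 < α₀) (hα₁ : 0 ≤ α₁) (hβ₁ : 0 < β₁)
    (hsum : α₀ + α₁ + β₁ = 1) (hlt : β₁ < α₀)
    (W : ℕ → Ω → ℤ) (hmeas : ∀ i, Measurable (W i))
    (hindep : iIndepFun W μ)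
    (hm1 : ∀ i, μ {ω | W i ω = -1} = ENNReal.ofReal α₀)
    (h0 : ∀ i, μ {ω | W i ω = 0} = ENNReal.ofReal α₁)
    (hp1 : ∀ i, μ {ω | W i ω = 1} = ENNReal.ofReal β₁) :
    (μ {ω | ∀ i : ℕ, 1 ≤ i →
        (if W (i - 1) ω = 0 then 1 else 0) + ∑ j ∈ Finset.range i, W j ω ≤ (0 : ℤ)}
      = ENNReal.ofReal ((α₀ - β₁) / (1 - β₁))) ∧
    (∀ a : ℕ, 1 ≤ a →
      μ {ω | (∀ i : ℕ, 1 ≤ i →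
            (if W (i - 1) ω = 0 then 1 else 0) + ∑ j ∈ Finset.range i, W j ω ≤ (a : ℤ)) ∧
          (∃ i : ℕ, 1 ≤ i ∧
            (if W (i - 1) ω = 0 then 1 else 0) + ∑ j ∈ Finset.range i, W j ω = (a : ℤ))}
        = ENNReal.ofReal ((α₀ - β₁) / (1 - β₁) * ((1 - α₀) / α₀) * (β₁ / α₀) ^ (a - 1))) := by
  classical
  -- abbreviations
  set p : ℤ → ℝ := pval α₀ α₁ β₁ with hp
  have hpnn : ∀ v, 0 ≤ p v := by
    intro v; rw [hp]; unfold pval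
    split_ifs <;> [exact hα₀.le; exact hα₁; exact hβ₁.le; exact le_refl 0]
  have hWm : ∀ (i : ℕ) (v : ℤ), MeasurableSet {ω | W i ω = v} :=
    fun i v => hmeas i (measurableSet_singleton v)
  -- full measure of {-1,0,1}
  have hfull : ∀ i, μ ({ω | W i ω = -1} ∪ {ω | W i ω = 0} ∪ {ω | W i ω = 1})ᶜ = 0 := by
    intro i
    have hd1 : Disjoint ({ω | W i ω = -1} ∪ {ω | W i ω = 0}) {ω | W i ω = 1} := by
      rw [Set.disjoint_left]; rintro ω (h | h) h2 <;> simp only [Set.mem_setOf_eq] at * <;> omega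
    have hd2 : Disjoint {ω | W i ω = -1} {ω | W i ω = 0} := by
      rw [Set.disjoint_left]; rintro ω h h2; simp only [Set.mem_setOf_eq] at *; omega
    have hU : μ ({ω | W i ω = -1} ∪ {ω | W i ω = 0} ∪ {ω | W i ω = 1}) = 1 := by
      rw [measure_union hd1 (hWm i 1), measure_union hd2 (hWm i 0), hm1 i, h0 i, hp1 i,
        ← ENNReal.ofReal_add hα₀.le hα₁, ← ENNReal.ofReal_add (by linarith) hβ₁.le, hsum,
        ENNReal.ofReal_one]
    rw [prob_compl_eq_zero_iff (((hWm i (-1)).union (hWm i 0)).union (hWm i 1))]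
    exact hU
  -- singleton law
  have hW : ∀ (i : ℕ) (v : ℤ), μ {ω | W i ω = v} = ENNReal.ofReal (p v) := by
    intro i v
    by_cases h1 : v = -1
    · subst h1; rw [hm1 i]; congr 1
    by_cases h2 : v = 0
    · subst h2; rw [h0 i]; congr 1
    by_cases h3 : v = 1
    · subst h3; rw [hp1 i]; congr 1
    have hz : p v = 0 := by simp [hp, pval, h1, h2, h3]
    rw [hz, ENNReal.ofReal_zero]
    refine measure_mono_null ?_ (hfull i)
    intro ω (hω : W i ω = v)
    simp only [Set.mem_compl_iff, Set.mem_union, Set.mem_setOf_eq, hω]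
    push_neg
    exact ⟨⟨h1, h2⟩, h3⟩
  -- independent atoms with shift k
  have hatom : ∀ (k : ℕ) (I : Finset ℕ) (f : ℕ → ℤ),
      μ (⋂ i ∈ I, {ω | W (i + k) ω = f i}) = ∏ i ∈ I, ENNReal.ofReal (p (f i)) := by
    intro k I f
    have h1 : (⋂ i ∈ I, {ω | W (i + k) ω = f i})
        = ⋂ j ∈ I.image (· + k), ((W j) ⁻¹' {f (j - k)}) := by
      ext ω
      simp only [Set.mem_iInter, Finset.mem_image, Set.mem_preimage, Set.mem_singleton_iff,
        Set.mem_setOf_eq]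
      constructor
      · rintro h j ⟨i, hi, rfl⟩
        simpa [Nat.add_sub_cancel] using h i hi
      · intro h i hi
        have := h (i + k) ⟨i, hi, rfl⟩
        simpa [Nat.add_sub_cancel] using this
    rw [h1, hindep.meas_biInter (fun j _ => ⟨{f (j - k)}, measurableSet_singleton _, rfl⟩),
      Finset.prod_image (fun a _ b _ h => by omega)]
    refine Finset.prod_congr rfl fun i _ => ?_
    rw [Nat.add_sub_cancel]
    exact hW (i + k) (f i)
  -- sequence maps
  set s0 : Ω → (ℕ → ℤ) := fun ω i => W i ω with hs0
  set s1 : Ω → (ℕ → ℤ) := fun ω i => W (i + 1) ω with hs1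
  have hs0m : Measurable s0 := measurable_pi_lambda _ (fun i => hmeas i)
  have hs1m : Measurable s1 := measurable_pi_lambda _ (fun i => hmeas (i + 1))
  -- cylinder computation
  have hcyl : ∀ (k : ℕ) (I : Finset ℕ) (S : Set (∀ _ : I, ℤ)),
      μ ((fun ω => (fun i : I => W (↑i + k) ω)) ⁻¹' S)
        = ∑' y : S, ∏ i ∈ I.attach, ENNReal.ofReal (p (y.1 i)) := by
    intro k I S
    have hpre : (fun ω => (fun i : I => W (↑i + k) ω)) ⁻¹' S
        = ⋃ y : S, ⋂ i ∈ I, {ω | W (i + k) ω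
            = (fun n => if h : n ∈ I then y.1 ⟨n, h⟩ else 0) i} := by
      ext ω
      simp only [Set.mem_preimage, Set.mem_iUnion, Set.mem_iInter, Set.mem_setOf_eq]
      constructor
      · intro h
        refine ⟨⟨_, h⟩, fun i hi => ?_⟩
        simp [hi]
      · rintro ⟨y, hy⟩
        have hxy : (fun i : I => W (↑i + k) ω) = y.1 := by
          funext i
          have := hy i i.2
          simpa [i.2] using this
        rw [hxy]; exact y.2
    have hdisj : Pairwise (Function.onFun Disjoint fun y : S => ⋂ i ∈ I, {ω | W (i + k) ω
        = (fun n => if h : n ∈ I then y.1 ⟨n, h⟩ else 0) i}) := by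
      intro y y' hne
      rw [Function.onFun, Set.disjoint_left]
      intro ω hω hω'
      simp only [Set.mem_iInter, Set.mem_setOf_eq] at hω hω'
      refine hne (Subtype.ext (funext fun i => ?_))
      have h1 := hω i i.2
      have h2 := hω' i i.2
      simp only [i.2, dif_pos] at h1 h2
      rw [← h1, ← h2]
    have hmeas' : ∀ y : S, MeasurableSet (⋂ i ∈ I, {ω | W (i + k) ω
        = (fun n => if h : n ∈ I then y.1 ⟨n, h⟩ else 0) i}) := by
      intro y
      exact MeasurableSet.biInter I.countable_toSet (fun i _ => hWm _ _)
    rw [hpre, measure_iUnion hdisj hmeas']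
    refine tsum_congr fun y => ?_
    rw [hatom k I _]
    rw [← Finset.prod_attach I (fun n => ENNReal.ofReal (p (if h : n ∈ I then y.1 ⟨n, h⟩ else 0)))]
    exact Finset.prod_congr rfl fun i _ => by simp [i.2]
  -- shift invariance
  have hmap : ∀ (B : Set (ℕ → ℤ)), MeasurableSet B → μ (s1 ⁻¹' B) = μ (s0 ⁻¹' B) := by
    suffices h : Measure.map s1 μ = Measure.map s0 μ by
      intro B hB
      rw [← Measure.map_apply hs1m hB, ← Measure.map_apply hs0m hB, h]
    haveI h1 : IsProbabilityMeasure (Measure.map s1 μ) := Measure.isProbabilityMeasure_map hs1m.aemeasurable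
    haveI h2 : IsProbabilityMeasure (Measure.map s0 μ) := Measure.isProbabilityMeasure_map hs0m.aemeasurable
    refine ext_of_generate_finite (measurableCylinders (fun _ : ℕ => ℤ))
      generateFrom_measurableCylinders.symm isPiSystem_measurableCylinders ?_ ?_
    · intro t ht
      have htm : MeasurableSet t := .of_mem_measurableCylinders ht
      obtain ⟨I, S, hSm, rfl⟩ := (mem_measurableCylinders t).1 ht
      rw [Measure.map_apply hs1m htm, Measure.map_apply hs0m htm]
      have e1 : s1 ⁻¹' cylinder I S = (fun ω => (fun i : I => W (↑i + 1) ω)) ⁻¹' S := rfl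
      have e0 : s0 ⁻¹' cylinder I S = (fun ω => (fun i : I => W (↑i + 0) ω)) ⁻¹' S := rfl
      rw [e1, e0, hcyl 1 I S, hcyl 0 I S]
    · simp [measure_univ]
  -- independence splitting
  have hsplit : ∀ (c : ℤ) (B : Set (ℕ → ℤ)), MeasurableSet B →
      μ ({ω | W 0 ω = c} ∩ s1 ⁻¹' B) = μ {ω | W 0 ω = c} * μ (s0 ⁻¹' B) := by
    intro c B hB
    have hle : ∀ n, MeasurableSpace.comap (W n) inferInstance ≤ (inferInstance : MeasurableSpace Ω) :=
      fun n => (hmeas n).comap_le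
    have hi := indep_biSup_compl hle hindep.iIndep {0}
    rw [Indep_iff] at hi
    have hmem1 : MeasurableSet[⨆ n ∈ ({0} : Set ℕ), MeasurableSpace.comap (W n) inferInstance]
        {ω | W 0 ω = c} := by
      have hc : MeasurableSet[MeasurableSpace.comap (W 0) inferInstance] {ω | W 0 ω = c} :=
        ⟨{c}, measurableSet_singleton c, rfl⟩
      exact le_biSup (fun n => MeasurableSpace.comap (W n) inferInstance)
        (Set.mem_singleton 0) _ hc
    have hmem2 : MeasurableSet[⨆ n ∈ ({0} : Set ℕ)ᶜ, MeasurableSpace.comap (W n) inferInstance]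
        (s1 ⁻¹' B) := by
      have hms1 : Measurable[⨆ n ∈ ({0} : Set ℕ)ᶜ, MeasurableSpace.comap (W n) inferInstance] s1 := by
        letI : MeasurableSpace Ω := ⨆ n ∈ ({0} : Set ℕ)ᶜ, MeasurableSpace.comap (W n) inferInstance
        refine measurable_pi_lambda _ (fun i => ?_)
        refine measurable_iff_comap_le.2 ?_
        exact le_biSup (fun n => MeasurableSpace.comap (W n) inferInstance) (by simp)
      exact hms1 hB
    rw [hi _ _ hmem1 hmem2, hmap B hB]
  -- decomposition over the value of W 0
  have hdecomp : ∀ S : Set Ω, MeasurableSet S →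
      μ S = μ ({ω | W 0 ω = -1} ∩ S) + μ ({ω | W 0 ω = 0} ∩ S) + μ ({ω | W 0 ω = 1} ∩ S) := by
    intro S hS
    set U := {ω | W 0 ω = -1} ∪ {ω | W 0 ω = 0} ∪ {ω | W 0 ω = 1} with hU
    have h2 : μ (S \ U) = 0 := measure_mono_null (fun ω h => h.2) (hfull 0)
    have h3 : μ S = μ (S ∩ U) := by
      refine le_antisymm ?_ (measure_mono Set.inter_subset_left)
      calc μ S = μ (S ∩ U ∪ S \ U) := by rw [Set.inter_union_diff]
        _ ≤ μ (S ∩ U) + μ (S \ U) := measure_union_le _ _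
        _ = μ (S ∩ U) := by rw [h2, add_zero]
    rw [h3, hU, Set.inter_union_distrib_left, Set.inter_union_distrib_left]
    have hd1 : Disjoint (S ∩ {ω | W 0 ω = -1} ∪ S ∩ {ω | W 0 ω = 0}) (S ∩ {ω | W 0 ω = 1}) := by
      rw [Set.disjoint_left]; rintro ω (⟨_, h⟩ | ⟨_, h⟩) ⟨_, h2⟩ <;>
        simp only [Set.mem_setOf_eq] at * <;> omega
    have hd2 : Disjoint (S ∩ {ω | W 0 ω = -1}) (S ∩ {ω | W 0 ω = 0}) := by
      rw [Set.disjoint_left]; rintro ω ⟨_, h⟩ ⟨_, h2⟩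
      simp only [Set.mem_setOf_eq] at *; omega
    rw [measure_union hd1 (hS.inter (hWm 0 1)), measure_union hd2 (hS.inter (hWm 0 0))]
    simp only [Set.inter_comm S]
  -- the measures of the events
  set m : ℕ → ENNReal := fun a => μ (s0 ⁻¹' Eseq a) with hm
  have hmE : ∀ a, MeasurableSet (s0 ⁻¹' Eseq a) := fun a => hs0m (measurable_Eseq a)
  have hmfin : ∀ a, m a ≠ ⊤ := fun a => measure_ne_top μ _
  have hmle : ∀ {a b : ℕ}, a ≤ b → m b ≤ m a :=
    fun {a b} h => measure_mono (Set.preimage_mono (Eseq_anti h))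
  -- recursion
  have hshift_eq : ∀ ω, shiftseq (s0 ω) = s1 ω := fun ω => rfl
  have hkey : ∀ (c : ℤ) (a b : ℕ), 1 ≤ a →
      (∀ x : ℕ → ℤ, x 0 = c → (x ∈ Eseq a ↔ shiftseq x ∈ Eseq b)) →
      μ ({ω | W 0 ω = c} ∩ s0 ⁻¹' Eseq a) = ENNReal.ofReal (p c) * m b := by
    intro c a b ha hiff
    have hseteq : {ω | W 0 ω = c} ∩ s0 ⁻¹' Eseq a = {ω | W 0 ω = c} ∩ s1 ⁻¹' Eseq b := by
      ext ω
      constructor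
      · rintro ⟨hc, hE⟩
        refine ⟨hc, ?_⟩
        have := (hiff (s0 ω) hc).1 hE
        rwa [hshift_eq] at this
      · rintro ⟨hc, hE⟩
        refine ⟨hc, ?_⟩
        refine (hiff (s0 ω) hc).2 ?_
        rwa [hshift_eq]
    rw [hseteq, hsplit c _ (measurable_Eseq b), hW 0 c]
  have hrec1 : m 1 = ENNReal.ofReal α₀ * m 2 + ENNReal.ofReal α₁ + ENNReal.ofReal β₁ := by
    have e1 := hkey (-1) 1 2 le_rfl (fun x hx => Eseq_step_neg 1 le_rfl x hx)
    have e2 : {ω | W 0 ω = 0} ∩ s0 ⁻¹' Eseq 1 = {ω | W 0 ω = 0} := by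
      rw [Set.inter_eq_left]
      intro ω hω
      exact Eseq_base_zero (s0 ω) hω
    have e3 : {ω | W 0 ω = 1} ∩ s0 ⁻¹' Eseq 1 = {ω | W 0 ω = 1} := by
      rw [Set.inter_eq_left]
      intro ω hω
      exact Eseq_base_one (s0 ω) hω
    have := hdecomp (s0 ⁻¹' Eseq 1) (hmE 1)
    rw [e1, e2, e3, h0 0, hp1 0] at this
    show μ (s0 ⁻¹' Eseq 1) = _
    rw [this]
    have hpm : p (-1) = α₀ := by simp [hp, pval]
    rw [hpm]
  have hrecE : ∀ a, 1 ≤ a →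
      m (a+1) = ENNReal.ofReal α₀ * m (a+2) + ENNReal.ofReal α₁ * m (a+1)
        + ENNReal.ofReal β₁ * m a := by
    intro a ha
    have e1 := hkey (-1) (a+1) (a+2) (by omega) (fun x hx => Eseq_step_neg (a+1) (by omega) x hx)
    have e2 := hkey 0 (a+1) (a+1) (by omega) (fun x hx => Eseq_step_zero a ha x hx)
    have e3 := hkey 1 (a+1) a (by omega) (fun x hx => Eseq_step_one a ha x hx)
    have := hdecomp (s0 ⁻¹' Eseq (a+1)) (hmE (a+1))
    rw [e1, e2, e3] at this
    show μ (s0 ⁻¹' Eseq (a+1)) = _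
    rw [this]
    have hpm : p (-1) = α₀ := by simp [hp, pval]
    have hp0 : p 0 = α₁ := by simp [hp, pval]
    have hpp : p 1 = β₁ := by simp [hp, pval]
    rw [hpm, hp0, hpp]
  -- limit via SLLN
  have hlim0 : μ (⋂ n : ℕ, s0 ⁻¹' Eseq (n+1)) = 0 := by
    set X : ℕ → Ω → ℝ := fun i ω => ((W i ω : ℤ) : ℝ) with hX
    have hcast : Measurable (fun v : ℤ => (v : ℝ)) := Measurable.of_discrete
    have hXm : ∀ i, Measurable (X i) := fun i => hcast.comp (hmeas i)
    have haefull : ∀ i, ∀ᵐ ω ∂μ, W i ω = -1 ∨ W i ω = 0 ∨ W i ω = 1 := by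
      intro i
      rw [ae_iff]
      refine measure_mono_null ?_ (hfull i)
      intro ω hω
      simp only [Set.mem_setOf_eq] at hω
      push_neg at hω
      simp only [Set.mem_compl_iff, Set.mem_union, Set.mem_setOf_eq]
      push_neg
      exact ⟨⟨hω.1, hω.2.1⟩, hω.2.2⟩
    have hint : Integrable (X 0) μ := by
      refine Integrable.mono' (integrable_const (1:ℝ)) (hXm 0).aestronglyMeasurable ?_
      filter_upwards [haefull 0] with ω h
      rcases h with h|h|h <;> simp [hX, h]
    have hpair : Pairwise (Function.onFun (IndepFun · · μ) X) := by
      intro i j hij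
      exact (hindep.indepFun hij).comp hcast hcast
    have hmapW : ∀ i, Measure.map (W i) μ = Measure.map (W 0) μ := by
      intro i
      refine Measure.ext_of_singleton fun v => ?_
      rw [Measure.map_apply (hmeas i) (measurableSet_singleton v),
        Measure.map_apply (hmeas 0) (measurableSet_singleton v)]
      exact (hW i v).trans (hW 0 v).symm
    have hident : ∀ i, IdentDistrib (X i) (X 0) μ μ := by
      intro i
      refine ⟨(hXm i).aemeasurable, (hXm 0).aemeasurable, ?_⟩
      show Measure.map (X i) μ = Measure.map (X 0) μ
      have e1 : X i = (fun v : ℤ => (v:ℝ)) ∘ W i := rfl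
      have e0 : X 0 = (fun v : ℤ => (v:ℝ)) ∘ W 0 := rfl
      rw [e1, e0, ← Measure.map_map hcast (hmeas i), ← Measure.map_map hcast (hmeas 0), hmapW i]
    have hEX : μ[X 0] = β₁ - α₀ := by
      have hXre : X 0 =ᵐ[μ] fun ω =>
          (Set.indicator {ω | W 0 ω = 1} (fun _ => (1:ℝ)) ω
            - Set.indicator {ω | W 0 ω = -1} (fun _ => (1:ℝ)) ω) := by
        filter_upwards [haefull 0] with ω h
        rcases h with h|h|h <;> simp [hX, Set.indicator_apply, h]
      rw [integral_congr_ae hXre, integral_sub ((integrable_const (1:ℝ)).indicator (hWm 0 1))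
        ((integrable_const (1:ℝ)).indicator (hWm 0 (-1))),
        integral_indicator_const (1:ℝ) (hWm 0 1), integral_indicator_const (1:ℝ) (hWm 0 (-1)),
        measureReal_def, measureReal_def, hp1 0, hm1 0, ENNReal.toReal_ofReal hβ₁.le, ENNReal.toReal_ofReal hα₀.le]
      simp
    have hslln := strong_law_ae_real X hint hpair hident
    rw [hEX] at hslln
    rw [ae_iff] at hslln
    refine measure_mono_null ?_ hslln
    intro ω hω
    simp only [Set.mem_iInter, Set.mem_preimage] at hω
    simp only [Set.mem_setOf_eq]
    intro htd
    have hev := htd.eventually_lt_const (show (β₁ - α₀ : ℝ) < 0 by linarith)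
    rw [eventually_atTop] at hev
    obtain ⟨N, hN⟩ := hev
    have hsum_le : ∀ n, N ≤ n → 1 ≤ n → (∑ j ∈ Finset.range n, W j ω) ≤ 0 := by
      intro n h1 h2
      have h3 := hN n h1
      have hn0 : (0:ℝ) < (n:ℝ) := by exact_mod_cast h2
      have hlt0 : (∑ i ∈ Finset.range n, X i ω) < 0 := by
        by_contra hc
        push_neg at hc
        have := div_nonneg hc hn0.le
        linarith
      have hcast2 : (((∑ j ∈ Finset.range n, W j ω) : ℤ) : ℝ) = ∑ i ∈ Finset.range n, X i ω := by
        simp only [hX]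
        push_cast
        rfl
      rw [← hcast2] at hlt0
      exact_mod_cast hlt0.le
    set M := max N 1 with hM
    have hTle : ∀ n, M ≤ n → Tseq (s0 ω) n ≤ 1 := by
      intro n hn
      have h4 := hsum_le n (le_trans (le_max_left _ _) hn) (le_trans (le_max_right _ _) hn)
      have h5 : Tseq (s0 ω) n
          = (if W (n - 1) ω = 0 then 1 else 0) + ∑ j ∈ Finset.range n, W j ω := rfl
      rw [h5]
      split_ifs <;> omega
    set b := (Finset.range (M+1)).sup (fun i => (Tseq (s0 ω) i).toNat) with hb
    obtain ⟨i, hi1, hiT⟩ := hω (b + 1)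
    by_cases hiM : i ≤ M
    · have hmem : i ∈ Finset.range (M+1) := by simp; omega
      have hle : (Tseq (s0 ω) i).toNat ≤ b := Finset.le_sup (f := fun i => (Tseq (s0 ω) i).toNat) hmem
      have h6 := Int.self_le_toNat (Tseq (s0 ω) i)
      push_cast at hiT
      omega
    · have h7 := hTle i (by omega)
      push_cast at hiT
      omega
  -- real sequence
  set xr : ℕ → ℝ := fun n => (m (n+1)).toReal with hxr
  have hofm_ne : ∀ (t : ℝ) (b : ℕ), ENNReal.ofReal t * m b ≠ ⊤ :=
    fun t b => ENNReal.mul_ne_top ENNReal.ofReal_ne_top (hmfin b)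
  have h0r : xr 0 = (1 - α₀) + α₀ * xr 1 := by
    have h := congrArg ENNReal.toReal hrec1
    rw [ENNReal.toReal_add (ENNReal.add_ne_top.2 ⟨hofm_ne α₀ 2, ENNReal.ofReal_ne_top⟩)
        ENNReal.ofReal_ne_top,
      ENNReal.toReal_add (hofm_ne α₀ 2) ENNReal.ofReal_ne_top,
      ENNReal.toReal_mul, ENNReal.toReal_ofReal hα₀.le, ENNReal.toReal_ofReal hα₁,
      ENNReal.toReal_ofReal hβ₁.le] at h
    show (m 1).toReal = _
    rw [h]
    have : (m 2).toReal = xr 1 := rfl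
    rw [this]
    linarith
  have hrecr : ∀ n, xr (n+1) = β₁ * xr n + α₁ * xr (n+1) + α₀ * xr (n+2) := by
    intro n
    have h := congrArg ENNReal.toReal (hrecE (n+1) (by omega))
    rw [ENNReal.toReal_add (ENNReal.add_ne_top.2 ⟨hofm_ne α₀ (n+3), hofm_ne α₁ (n+2)⟩)
        (hofm_ne β₁ (n+1)),
      ENNReal.toReal_add (hofm_ne α₀ (n+3)) (hofm_ne α₁ (n+2)),
      ENNReal.toReal_mul, ENNReal.toReal_mul, ENNReal.toReal_mul,
      ENNReal.toReal_ofReal hα₀.le, ENNReal.toReal_ofReal hα₁,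
      ENNReal.toReal_ofReal hβ₁.le] at h
    show (m (n+2)).toReal = _
    rw [h]
    have e1 : (m (n+3)).toReal = xr (n+2) := rfl
    have e2 : (m (n+2)).toReal = xr (n+1) := rfl
    have e3 : (m (n+1)).toReal = xr n := rfl
    rw [e1, e2, e3]
    linarith
  have hlimr : Filter.Tendsto xr Filter.atTop (nhds 0) := by
    have hanti : Antitone (fun n : ℕ => s0 ⁻¹' Eseq (n+1)) :=
      fun a b hab => Set.preimage_mono (Eseq_anti (by omega))
    have htd := tendsto_measure_iInter_atTop
      (fun n => (hmE (n+1)).nullMeasurableSet) hanti ⟨0, hmfin 1⟩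
    rw [hlim0] at htd
    have h2 := (ENNReal.tendsto_toReal (a := 0) (by simp)).comp htd
    exact h2
  have hsol := solve_rec α₀ α₁ β₁ hα₀ hα₁ hβ₁ hsum hlt xr h0r hrecr hlimr
  have hmval : ∀ n : ℕ, m (n+1) = ENNReal.ofReal ((β₁/α₀)^n * ((1-α₀)/(1-β₁))) := by
    intro n
    rw [← ENNReal.ofReal_toReal (hmfin (n+1))]
    congr 1
    exact hsol n
  have hβ1 : (0:ℝ) < 1 - β₁ := by nlinarith
  have hTT : ∀ (ω : Ω) (i : ℕ), Tseq (s0 ω) i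
      = (if W (i - 1) ω = 0 then 1 else 0) + ∑ j ∈ Finset.range i, W j ω := fun _ _ => rfl
  constructor
  · have hset1 : {ω | ∀ i : ℕ, 1 ≤ i →
        (if W (i - 1) ω = 0 then 1 else 0) + ∑ j ∈ Finset.range i, W j ω ≤ (0 : ℤ)}
        = (s0 ⁻¹' Eseq 1)ᶜ := by
      ext ω
      simp only [Set.mem_setOf_eq, Set.mem_compl_iff, Set.mem_preimage, Eseq, not_exists]
      constructor
      · rintro h i ⟨hi, hT⟩
        have h2 := h i hi
        rw [hTT] at hT
        push_cast at hT
        omega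
      · intro h i hi
        by_contra hc
        push_neg at hc
        refine h i ⟨hi, ?_⟩
        rw [hTT]
        push_cast
        omega
    rw [hset1, prob_compl_eq_one_sub (hmE 1)]
    have hm1v : μ (s0 ⁻¹' Eseq 1) = ENNReal.ofReal ((1 - α₀) / (1 - β₁)) := by
      have h := hmval 0
      rw [pow_zero, one_mul] at h
      exact h
    rw [hm1v]
    have hid : (α₀ - β₁) / (1 - β₁) = 1 - (1 - α₀) / (1 - β₁) := by
      field_simp
      ring
    rw [hid, ENNReal.ofReal_sub _ (div_nonneg (by linarith) hβ1.le), ENNReal.ofReal_one]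
  · intro a ha
    obtain ⟨n, rfl⟩ : ∃ n, a = n + 1 := ⟨a - 1, by omega⟩
    have hset2 : {ω | (∀ i : ℕ, 1 ≤ i →
          (if W (i - 1) ω = 0 then 1 else 0) + ∑ j ∈ Finset.range i, W j ω ≤ ((n+1 : ℕ) : ℤ)) ∧
        (∃ i : ℕ, 1 ≤ i ∧
          (if W (i - 1) ω = 0 then 1 else 0) + ∑ j ∈ Finset.range i, W j ω = ((n+1 : ℕ) : ℤ))}
        = s0 ⁻¹' Eseq (n+1) \ s0 ⁻¹' Eseq (n+2) := by
      ext ω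
      simp only [Set.mem_setOf_eq, Set.mem_diff, Set.mem_preimage, Eseq, not_exists]
      constructor
      · rintro ⟨hall, i, hi, heq⟩
        refine ⟨⟨i, hi, by rw [hTT]; push_cast; omega⟩, ?_⟩
        rintro i' ⟨hi', hT'⟩
        have h2 := hall i' hi'
        rw [hTT] at hT'
        push_cast at hT' h2 ⊢
        omega
      · rintro ⟨⟨i, hi, hT⟩, hnot⟩
        rw [hTT] at hT
        have hub : ∀ i' : ℕ, 1 ≤ i' →
            (if W (i' - 1) ω = 0 then 1 else 0) + ∑ j ∈ Finset.range i' , W j ω ≤ ((n+1 : ℕ) : ℤ) := by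
          intro i' hi'
          by_contra hc
          push_neg at hc
          refine hnot i' ⟨hi', ?_⟩
          rw [hTT]
          push_cast at hc ⊢
          omega
        refine ⟨hub, i, hi, ?_⟩
        have h3 := hub i hi
        push_cast at hT h3 ⊢
        omega
    rw [hset2, measure_diff (Set.preimage_mono (Eseq_anti (by omega)))
      (hmE (n+2)).nullMeasurableSet (hmfin (n+2))]
    have hv1 := hmval n
    have hv2 := hmval (n+1)
    show m (n+1) - m (n+2) = _
    rw [hv1, hv2, ← ENNReal.ofReal_sub _ (mul_nonneg (pow_nonneg (div_nonneg hβ₁.le hα₀.le) _) (div_nonneg (by linarith) hβ1.le))]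
    congr 1
    have hstep : (n + 1) - 1 = n := by omega
    rw [hstep]
    have hα₀' : α₀ ≠ 0 := ne_of_gt hα₀
    have hβ1' : (1:ℝ) - β₁ ≠ 0 := ne_of_gt hβ1
    rw [pow_succ]
    field_simp
end
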